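/- arXiv:1704.08403 — 19 statements merged into one kernel-verified Lean document; each statement's English description precedes it below -/
import Mathlib

section
/- Let A, G, X be n×n complex matrices. If X satisfies A·X² = X and A·X = G·A, then X = G²·A. In particular, for fixed A and G, the system of equations A·X² = X, A·X = G·A has at most one solution X. -/
/-- If `X` satisfies `A·X² = X` and `A·X = G·A`, then `X = G²·A`; in particular,
for fixed `A` and `G` the system has at most one solution. -/
theorem wg_inverse_unique {n : ℕ} (A G X : Matrix (Fin n) (Fin n) ℂ)
    (h1 : A * X ^ 2 = X) (h2 : A * X = G * A) :
    X = G ^ 2 * A ∧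
      ∀ Y : Matrix (Fin n) (Fin n) ℂ, A * Y ^ 2 = Y → A * Y = G * A → Y = X := by
  have key : ∀ Z : Matrix (Fin n) (Fin n) ℂ, A * Z ^ 2 = Z → A * Z = G * A →
      Z = G ^ 2 * A := by
    intro Z hz1 hz2
    calc Z = A * Z ^ 2 := hz1.symm
    _ = A * Z * Z := by rw [sq, ← mul_assoc]
    _ = G * A * Z := by rw [hz2]
    _ = G * (G * A) := by rw [mul_assoc, hz2]
    _ = G ^ 2 * A := by rw [sq, mul_assoc]
  refine ⟨key X h1 h2, fun Y hy1 hy2 => ?_⟩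
  rw [key Y hy1 hy2, key X h1 h2]
end

section
/- Let A = U · fromBlocks T S 0 N · Uᴴ be a core-EP decomposition of the square complex matrix A (U unitary, T invertible, N nilpotent). Define W = U · fromBlocks T⁻¹ (T⁻¹·T⁻¹·S) 0 0 · Uᴴ and G = U · fromBlocks T⁻¹ 0 0 0 · Uᴴ. Then A·W² = W and A·W = G·A; that is, W solves the defining system of the WG inverse (so the WG inverse of A exists). -/
open Matrix

/-- If `A = U · fromBlocks T S 0 N · Uᴴ` is a core-EP decomposition of `A`, then
`W = U · fromBlocks T⁻¹ (T⁻¹T⁻¹S) 0 0 · Uᴴ` solves the defining system of the WG inverse: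
`A·W² = W` and `A·W = G·A`, where `G` is the core-EP inverse of `A`. -/
theorem wg_inverse_exists {m p : Type*} [Fintype m] [Fintype p] [DecidableEq m] [DecidableEq p]
    (U : Matrix (m ⊕ p) (m ⊕ p) ℂ) (T : Matrix m m ℂ) (S : Matrix m p ℂ) (N : Matrix p p ℂ)
    (hU : U * Uᴴ = 1) (hU' : Uᴴ * U = 1) (hT : IsUnit T) (hN : IsNilpotent N)
    (A W G : Matrix (m ⊕ p) (m ⊕ p) ℂ)
    (hA : A = U * Matrix.fromBlocks T S 0 N * Uᴴ)
    (hW : W = U * Matrix.fromBlocks T⁻¹ (T⁻¹ * T⁻¹ * S) 0 0 * Uᴴ)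
    (hG : G = U * Matrix.fromBlocks T⁻¹ 0 0 0 * Uᴴ) :
    A * W ^ 2 = W ∧ A * W = G * A := by
  have hdet : IsUnit T.det := (Matrix.isUnit_iff_isUnit_det T).mp hT
  have hTi : T * T⁻¹ = 1 := Matrix.mul_nonsing_inv T hdet
  have hTi' : T⁻¹ * T = 1 := Matrix.nonsing_inv_mul T hdet
  subst hA hW hG
  constructor
  · calc (U * fromBlocks T S 0 N * Uᴴ) * (U * fromBlocks T⁻¹ (T⁻¹ * T⁻¹ * S) 0 0 * Uᴴ) ^ 2
        = U * (fromBlocks T S 0 N * (Uᴴ * U) * fromBlocks T⁻¹ (T⁻¹ * T⁻¹ * S) 0 0 * (Uᴴ * U)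
            * fromBlocks T⁻¹ (T⁻¹ * T⁻¹ * S) 0 0) * Uᴴ := by
          rw [sq]; noncomm_ring
      _ = U * fromBlocks T⁻¹ (T⁻¹ * T⁻¹ * S) 0 0 * Uᴴ := by
          rw [hU', Matrix.mul_one, Matrix.mul_one, Matrix.fromBlocks_multiply,
            Matrix.fromBlocks_multiply]
          congr 2
          congr 1 <;> simp [Matrix.mul_assoc, hTi, hTi', ← Matrix.mul_assoc]
  · calc (U * fromBlocks T S 0 N * Uᴴ) * (U * fromBlocks T⁻¹ (T⁻¹ * T⁻¹ * S) 0 0 * Uᴴ)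
        = U * (fromBlocks T S 0 N * (Uᴴ * U) * fromBlocks T⁻¹ (T⁻¹ * T⁻¹ * S) 0 0) * Uᴴ := by
          noncomm_ring
      _ = U * (fromBlocks T⁻¹ 0 0 0 * (Uᴴ * U) * fromBlocks T S 0 N) * Uᴴ := by
          rw [hU', Matrix.mul_one, Matrix.mul_one, Matrix.fromBlocks_multiply,
            Matrix.fromBlocks_multiply]
          congr 1
          congr 1 <;> simp [Matrix.mul_assoc, hTi, hTi', ← Matrix.mul_assoc]
      _ = (U * fromBlocks T⁻¹ 0 0 0 * Uᴴ) * (U * fromBlocks T S 0 N * Uᴴ) := by noncomm_ring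
end

section
/- Let A = U · fromBlocks T S 0 0 · Uᴴ with U unitary and T invertible (so A has index at most one, i.e., A is group invertible), and let W = U · fromBlocks T⁻¹ (T⁻¹·T⁻¹·S) 0 0 · Uᴴ. Then W is the group inverse of A: A·W·A = A, W·A·W = W, and A·W = W·A. -/
open Matrix

/-- For a group invertible matrix `A = U · fromBlocks T S 0 0 · Uᴴ` (U unitary, T invertible),
the WG inverse `W = U · fromBlocks T⁻¹ (T⁻¹T⁻¹S) 0 0 · Uᴴ` is the group inverse of `A`. -/
theorem wg_inverse_eq_group_inverse {m p : Type*}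
    [Fintype m] [Fintype p] [DecidableEq m] [DecidableEq p]
    (U : Matrix (m ⊕ p) (m ⊕ p) ℂ) (T : Matrix m m ℂ) (S : Matrix m p ℂ)
    (hU : U * Uᴴ = 1) (hU' : Uᴴ * U = 1) (hT : IsUnit T)
    (A W : Matrix (m ⊕ p) (m ⊕ p) ℂ)
    (hA : A = U * Matrix.fromBlocks T S 0 0 * Uᴴ)
    (hW : W = U * Matrix.fromBlocks T⁻¹ (T⁻¹ * T⁻¹ * S) 0 0 * Uᴴ) :
    A * W * A = A ∧ W * A * W = W ∧ A * W = W * A := by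
  have hdet : IsUnit T.det := (Matrix.isUnit_iff_isUnit_det T).mp hT
  have hTl : T⁻¹ * T = 1 := Matrix.nonsing_inv_mul T hdet
  have hTr : T * T⁻¹ = 1 := Matrix.mul_nonsing_inv T hdet
  subst hA hW
  have key : ∀ (F G : Matrix (m ⊕ p) (m ⊕ p) ℂ),
      (U * F * Uᴴ) * (U * G * Uᴴ) = U * (F * G) * Uᴴ := by
    intro F G
    calc (U * F * Uᴴ) * (U * G * Uᴴ) = U * F * (Uᴴ * U) * G * Uᴴ := by
          simp only [Matrix.mul_assoc]
      _ = U * (F * G) * Uᴴ := by rw [hU']; simp only [Matrix.mul_one, Matrix.mul_assoc]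
  have h1 : (Matrix.fromBlocks T S 0 0 : Matrix (m ⊕ p) (m ⊕ p) ℂ) * Matrix.fromBlocks T⁻¹ (T⁻¹ * T⁻¹ * S) 0 0
      = Matrix.fromBlocks 1 (T⁻¹ * S) 0 0 := by
    simp [Matrix.fromBlocks_multiply, hTr, ← Matrix.mul_assoc]
  have h2 : (Matrix.fromBlocks T⁻¹ (T⁻¹ * T⁻¹ * S) 0 0 : Matrix (m ⊕ p) (m ⊕ p) ℂ) * Matrix.fromBlocks T S 0 0
      = Matrix.fromBlocks 1 (T⁻¹ * S) 0 0 := by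
    simp [Matrix.fromBlocks_multiply, hTl]
  refine ⟨?_, ?_, ?_⟩
  · rw [key, key, h1]
    congr 1
    simp [Matrix.fromBlocks_multiply, hTl, Matrix.mul_assoc]
  · rw [key, key, h2]
    congr 1
    simp [Matrix.fromBlocks_multiply, hTr, ← Matrix.mul_assoc]
  · rw [key, key, h1, h2]
end

section
/- Let A = U · fromBlocks T S 0 N · Uᴴ be a core-EP decomposition of the square complex matrix A with N^k = 0 for a natural number k ≥ 1, and let W = U · fromBlocks T⁻¹ (T⁻¹·T⁻¹·S) 0 0 · Uᴴ be the WG inverse of A. Then W · A^(k+1) = A^k; that is, the WG inverse is a weak Drazin inverse of A. -/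
open Matrix

private noncomputable def wgC {m p : Type*} [Fintype m] [Fintype p] [DecidableEq p]
    (T : Matrix m m ℂ) (S : Matrix m p ℂ) (N : Matrix p p ℂ) : ℕ → Matrix m p ℂ
  | 0 => 0
  | n + 1 => T * wgC T S N n + S * N ^ n

private lemma wg_pow_fromBlocks {m p : Type*} [Fintype m] [Fintype p]
    [DecidableEq m] [DecidableEq p]
    (T : Matrix m m ℂ) (S : Matrix m p ℂ) (N : Matrix p p ℂ) (n : ℕ) :
    (Matrix.fromBlocks T S 0 N) ^ n
      = Matrix.fromBlocks (T ^ n) (wgC T S N n) 0 (N ^ n) := by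
  induction n with
  | zero => simp [wgC, Matrix.fromBlocks_one]
  | succ n ih =>
    rw [pow_succ', ih, Matrix.fromBlocks_multiply]
    simp [wgC, pow_succ']

/-- The WG inverse `W` of `A = U · fromBlocks T S 0 N · Uᴴ` (with `N^k = 0`, `k ≥ 1`)
is a weak Drazin inverse of `A`: `W · A^(k+1) = A^k`. -/
theorem wg_inverse_is_weak_drazin {m p : Type*}
    [Fintype m] [Fintype p] [DecidableEq m] [DecidableEq p]
    (U : Matrix (m ⊕ p) (m ⊕ p) ℂ) (T : Matrix m m ℂ) (S : Matrix m p ℂ) (N : Matrix p p ℂ)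
    (hU : U * Uᴴ = 1) (hU' : Uᴴ * U = 1) (hT : IsUnit T)
    (k : ℕ) (hk : 1 ≤ k) (hN : N ^ k = 0)
    (A W : Matrix (m ⊕ p) (m ⊕ p) ℂ)
    (hA : A = U * Matrix.fromBlocks T S 0 N * Uᴴ)
    (hW : W = U * Matrix.fromBlocks T⁻¹ (T⁻¹ * T⁻¹ * S) 0 0 * Uᴴ) :
    W * A ^ (k + 1) = A ^ k := by
  have hTinv : T⁻¹ * T = 1 :=
    Matrix.nonsing_inv_mul T ((Matrix.isUnit_iff_isUnit_det T).mp hT)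
  have hApow : ∀ n : ℕ, A ^ n = U * (Matrix.fromBlocks T S 0 N) ^ n * Uᴴ := by
    intro n
    induction n with
    | zero => simp [hU]
    | succ n ih =>
      rw [pow_succ, ih, hA]
      rw [show ∀ B C : Matrix (m ⊕ p) (m ⊕ p) ℂ,
          U * B * Uᴴ * (U * C * Uᴴ) = U * (B * (Uᴴ * U) * C) * Uᴴ by
        intros; noncomm_ring]
      rw [hU', mul_one, ← pow_succ]
  rw [hApow, hApow, hW]
  rw [show ∀ B C : Matrix (m ⊕ p) (m ⊕ p) ℂ,
      U * B * Uᴴ * (U * C * Uᴴ) = U * (B * (Uᴴ * U) * C) * Uᴴ by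
    intros; noncomm_ring, hU', mul_one]
  congr 2
  rw [wg_pow_fromBlocks, wg_pow_fromBlocks, Matrix.fromBlocks_multiply]
  have hNk1 : N ^ (k + 1) = 0 := by rw [pow_succ, hN, zero_mul]
  have hCk1 : wgC T S N (k + 1) = T * wgC T S N k := by
    simp [wgC, hN]
  rw [hNk1, hCk1]
  simp [pow_succ', ← mul_assoc, hTinv, hN]
  rw [← Matrix.mul_assoc, hTinv, Matrix.one_mul]
end

section
/- Let A = U · fromBlocks T S 0 N · Uᴴ be a core-EP decomposition of the square complex matrix A, let G = U · fromBlocks T⁻¹ 0 0 0 · Uᴴ be its core-EP inverse, and let W = U · fromBlocks T⁻¹ (T⁻¹·T⁻¹·S) 0 0 · Uᴴ be its WG inverse. Set A₁ = U · fromBlocks T S 0 0 · Uᴴ (the core part of A). Then A·G·A = A₁, and W is the group inverse of A₁: A₁·W·A₁ = A₁, W·A₁·W = W, and A₁·W = W·A₁. -/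
open Matrix

/-- For `A = U · fromBlocks T S 0 N · Uᴴ` with core-EP inverse `G` and WG inverse `W`,
and core part `A₁ = U · fromBlocks T S 0 0 · Uᴴ`, we have `A·G·A = A₁` and `W` is the
group inverse of `A₁`. -/
theorem wg_inverse_group_inverse_of_core_part {m p : Type*}
    [Fintype m] [Fintype p] [DecidableEq m] [DecidableEq p]
    (U : Matrix (m ⊕ p) (m ⊕ p) ℂ) (T : Matrix m m ℂ) (S : Matrix m p ℂ) (N : Matrix p p ℂ)
    (hU : U * Uᴴ = 1) (hU' : Uᴴ * U = 1) (hT : IsUnit T) (hN : IsNilpotent N)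
    (A G W A₁ : Matrix (m ⊕ p) (m ⊕ p) ℂ)
    (hA : A = U * Matrix.fromBlocks T S 0 N * Uᴴ)
    (hG : G = U * Matrix.fromBlocks T⁻¹ 0 0 0 * Uᴴ)
    (hW : W = U * Matrix.fromBlocks T⁻¹ (T⁻¹ * T⁻¹ * S) 0 0 * Uᴴ)
    (hA₁ : A₁ = U * Matrix.fromBlocks T S 0 0 * Uᴴ) :
    A * G * A = A₁ ∧ A₁ * W * A₁ = A₁ ∧ W * A₁ * W = W ∧ A₁ * W = W * A₁ := by
  have hconj : ∀ X Y : Matrix (m ⊕ p) (m ⊕ p) ℂ,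
      (U * X * Uᴴ) * (U * Y * Uᴴ) = U * (X * Y) * Uᴴ := by
    intro X Y
    rw [Matrix.mul_assoc (U * X) Uᴴ, ← Matrix.mul_assoc Uᴴ (U * Y) Uᴴ,
      ← Matrix.mul_assoc Uᴴ U Y, hU', Matrix.one_mul, ← Matrix.mul_assoc,
      Matrix.mul_assoc U X Y]
  have hdet : IsUnit T.det := (Matrix.isUnit_iff_isUnit_det T).mp hT
  have h1 : T * T⁻¹ = 1 := Matrix.mul_nonsing_inv T hdet
  have h2 : T⁻¹ * T = 1 := Matrix.nonsing_inv_mul T hdet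
  have h3 : ∀ B : Matrix m p ℂ, T⁻¹ * (T * B) = B := fun B => by
    rw [← Matrix.mul_assoc, h2, Matrix.one_mul]
  have h4 : ∀ B : Matrix m p ℂ, T * (T⁻¹ * B) = B := fun B => by
    rw [← Matrix.mul_assoc, h1, Matrix.one_mul]
  subst hA hG hW hA₁
  refine ⟨?_, ?_, ?_, ?_⟩ <;>
  · simp only [hconj]
    congr 1
    congr 1
    simp [Matrix.fromBlocks_multiply, h1, h2, h3, h4, Matrix.mul_assoc]
end

section
/- Let A = U · fromBlocks T S 0 N · Uᴴ be a core-EP decomposition of the square complex matrix A and let W = U · fromBlocks T⁻¹ (T⁻¹·T⁻¹·S) 0 0 · Uᴴ be its WG inverse. Then A² = U · fromBlocks (T·T) (T·S + S·N) 0 (N·N) · Uᴴ is a core-EP decomposition of A² (T·T is invertible and N·N is nilpotent), and the core-EP inverse of A², namely U · fromBlocks (T·T)⁻¹ 0 0 0 · Uᴴ, satisfies (U · fromBlocks (T·T)⁻¹ 0 0 0 · Uᴴ) · A = W. -/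
open Matrix

/-- `A² = U · fromBlocks (T·T) (T·S+S·N) 0 (N·N) · Uᴴ` is a core-EP decomposition of `A²`,
and the core-EP inverse of `A²` times `A` equals the WG inverse `W` of `A`:
`A^WG = (A²)^core-EP · A`. -/
theorem wg_inverse_eq_coreEP_sq_mul {m p : Type*}
    [Fintype m] [Fintype p] [DecidableEq m] [DecidableEq p]
    (U : Matrix (m ⊕ p) (m ⊕ p) ℂ) (T : Matrix m m ℂ) (S : Matrix m p ℂ) (N : Matrix p p ℂ)
    (hU : U * Uᴴ = 1) (hU' : Uᴴ * U = 1) (hT : IsUnit T) (hN : IsNilpotent N)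
    (A W : Matrix (m ⊕ p) (m ⊕ p) ℂ)
    (hA : A = U * Matrix.fromBlocks T S 0 N * Uᴴ)
    (hW : W = U * Matrix.fromBlocks T⁻¹ (T⁻¹ * T⁻¹ * S) 0 0 * Uᴴ) :
    A ^ 2 = U * Matrix.fromBlocks (T * T) (T * S + S * N) 0 (N * N) * Uᴴ ∧
    IsUnit (T * T) ∧ IsNilpotent (N * N) ∧
    (U * Matrix.fromBlocks (T * T)⁻¹ 0 0 0 * Uᴴ) * A = W := by
  have hTdet : IsUnit T.det := (Matrix.isUnit_iff_isUnit_det T).mp hT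
  have hTinv : T⁻¹ * T = 1 := Matrix.nonsing_inv_mul T hTdet
  refine ⟨?_, hT.mul hT, (Commute.refl N).isNilpotent_mul_left hN, ?_⟩
  · subst hA
    rw [pow_two]
    calc U * fromBlocks T S 0 N * Uᴴ * (U * fromBlocks T S 0 N * Uᴴ)
        = U * (fromBlocks T S 0 N * (Uᴴ * U) * fromBlocks T S 0 N) * Uᴴ := by
          noncomm_ring
      _ = U * Matrix.fromBlocks (T * T) (T * S + S * N) 0 (N * N) * Uᴴ := by
          rw [hU', mul_one, Matrix.fromBlocks_multiply]
          simp
  · subst hA hW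
    calc U * fromBlocks (T * T)⁻¹ 0 0 0 * Uᴴ * (U * fromBlocks T S 0 N * Uᴴ)
        = U * (fromBlocks (T * T)⁻¹ 0 0 0 * (Uᴴ * U) * fromBlocks T S 0 N) * Uᴴ := by
          noncomm_ring
      _ = U * fromBlocks T⁻¹ (T⁻¹ * T⁻¹ * S) 0 0 * Uᴴ := by
          rw [hU', mul_one, Matrix.fromBlocks_multiply, Matrix.mul_inv_rev]
          congr 1
          · simp [mul_assoc, hTinv]
end

section
/- Let A = U · fromBlocks T S 0 N · Uᴴ be a core-EP decomposition of the square complex matrix A with N^k = 0 for a natural number k ≥ 1, and let W = U · fromBlocks T⁻¹ (T⁻¹·T⁻¹·S) 0 0 · Uᴴ be its WG inverse. Then A^k · (U · fromBlocks (T^(k+2))⁻¹ 0 0 0 · Uᴴ) · A = W, where U · fromBlocks (T^(k+2))⁻¹ 0 0 0 · Uᴴ is the core-EP (core) inverse of A^(k+2). -/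
open Matrix

lemma conj_pow_aux {n : Type*} [Fintype n] [DecidableEq n]
    (U M : Matrix n n ℂ) (hU : U * Uᴴ = 1) (hU' : Uᴴ * U = 1) (k : ℕ) :
    (U * M * Uᴴ) ^ k = U * M ^ k * Uᴴ := by
  induction k with
  | zero => simp [hU]
  | succ k ih =>
      rw [pow_succ, ih, pow_succ]
      calc U * M ^ k * Uᴴ * (U * M * Uᴴ)
          = U * M ^ k * (Uᴴ * U) * M * Uᴴ := by noncomm_ring
        _ = U * (M ^ k * M) * Uᴴ := by rw [hU']; noncomm_ring

lemma fromBlocks_pow_aux {m p : Type*} [Fintype m] [Fintype p] [DecidableEq m] [DecidableEq p]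
    (T : Matrix m m ℂ) (S : Matrix m p ℂ) (N : Matrix p p ℂ) (k : ℕ) :
    ∃ X, (Matrix.fromBlocks T S 0 N) ^ k = Matrix.fromBlocks (T ^ k) X 0 (N ^ k) := by
  induction k with
  | zero => exact ⟨0, by simp [Matrix.fromBlocks_one]⟩
  | succ k ih =>
      obtain ⟨X, hX⟩ := ih
      refine ⟨T ^ k * S + X * N, ?_⟩
      rw [pow_succ, hX, Matrix.fromBlocks_multiply]
      simp [pow_succ]

lemma pow_mul_inv_pow_aux {m : Type*} [Fintype m] [DecidableEq m]
    (T : Matrix m m ℂ) (hTi' : T * T⁻¹ = 1) (k : ℕ) :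
    T ^ k * T⁻¹ ^ k = 1 := by
  induction k with
  | zero => simp
  | succ k ih =>
      rw [pow_succ, pow_succ']
      calc T ^ k * T * (T⁻¹ * T⁻¹ ^ k) = T ^ k * (T * T⁻¹) * T⁻¹ ^ k := by noncomm_ring
        _ = 1 := by rw [hTi', mul_one, ih]

/-- `A^WG = A^k · (A^(k+2))^core · A` where `Ind(A) = k`: with
`A = U · fromBlocks T S 0 N · Uᴴ`, `N^k = 0`, the core (core-EP) inverse of `A^(k+2)` is
`U · fromBlocks (T^(k+2))⁻¹ 0 0 0 · Uᴴ`, and `A^k · (U · fromBlocks (T^(k+2))⁻¹ 0 0 0 · Uᴴ) · A`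
equals the WG inverse `W` of `A`. -/
theorem wg_inverse_eq_pow_core_mul {m p : Type*}
    [Fintype m] [Fintype p] [DecidableEq m] [DecidableEq p]
    (U : Matrix (m ⊕ p) (m ⊕ p) ℂ) (T : Matrix m m ℂ) (S : Matrix m p ℂ) (N : Matrix p p ℂ)
    (hU : U * Uᴴ = 1) (hU' : Uᴴ * U = 1) (hT : IsUnit T)
    (k : ℕ) (hk : 1 ≤ k) (hN : N ^ k = 0)
    (A W : Matrix (m ⊕ p) (m ⊕ p) ℂ)
    (hA : A = U * Matrix.fromBlocks T S 0 N * Uᴴ)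
    (hW : W = U * Matrix.fromBlocks T⁻¹ (T⁻¹ * T⁻¹ * S) 0 0 * Uᴴ) :
    A ^ k * (U * Matrix.fromBlocks (T ^ (k + 2))⁻¹ 0 0 0 * Uᴴ) * A = W := by
  have hd : IsUnit T.det := (Matrix.isUnit_iff_isUnit_det T).mp hT
  have hTi : T⁻¹ * T = 1 := Matrix.nonsing_inv_mul T hd
  have hTi' : T * T⁻¹ = 1 := Matrix.mul_nonsing_inv T hd
  obtain ⟨X, hX⟩ := fromBlocks_pow_aux T S N k
  have hAk : A ^ k = U * Matrix.fromBlocks (T ^ k) X 0 0 * Uᴴ := by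
    rw [hA, conj_pow_aux U _ hU hU', hX, hN]
  have hkey : T ^ k * (T ^ (k + 2))⁻¹ = T⁻¹ * T⁻¹ := by
    rw [← Matrix.inv_pow']
    have h2 : (T⁻¹) ^ (k + 2) = T⁻¹ ^ k * (T⁻¹ * T⁻¹) := by
      rw [pow_add, pow_two]
    rw [h2, ← mul_assoc, pow_mul_inv_pow_aux T hTi' k, one_mul]
  rw [hAk, hA, hW]
  calc U * Matrix.fromBlocks (T ^ k) X 0 0 * Uᴴ *
        (U * Matrix.fromBlocks (T ^ (k + 2))⁻¹ 0 0 0 * Uᴴ) *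
        (U * Matrix.fromBlocks T S 0 N * Uᴴ)
      = U * (Matrix.fromBlocks (T ^ k) X 0 0 * (Uᴴ * U) *
          Matrix.fromBlocks (T ^ (k + 2))⁻¹ 0 0 0 * (Uᴴ * U) *
          Matrix.fromBlocks T S 0 N) * Uᴴ := by noncomm_ring
    _ = U * (Matrix.fromBlocks (T ^ k) X 0 0 *
          Matrix.fromBlocks (T ^ (k + 2))⁻¹ 0 0 0 *
          Matrix.fromBlocks T S 0 N) * Uᴴ := by rw [hU']; noncomm_ring
    _ = U * Matrix.fromBlocks T⁻¹ (T⁻¹ * T⁻¹ * S) 0 0 * Uᴴ := by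
        rw [Matrix.fromBlocks_multiply, Matrix.fromBlocks_multiply]
        simp [hkey, mul_assoc, hTi]
end

section
/- Let A = U · fromBlocks T S 0 N · Uᴴ be a core-EP decomposition of the square complex matrix A with N^k = 0 for a natural number k ≥ 1, and let W = U · fromBlocks T⁻¹ (T⁻¹·T⁻¹·S) 0 0 · Uᴴ be its WG inverse. Then rank(W) = rank(A^k). -/
/-!
Conjugation by the unitary `U` preserves both ranks and commutes with powers, so it suffices
to compare `fromBlocks T⁻¹ (T⁻¹ * T⁻¹ * S) 0 0` with the `k`-th power of `fromBlocks T S 0 N`.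
The latter is again block upper triangular, with diagonal blocks `T ^ k` and `N ^ k = 0`.
Both are therefore of the form `fromBlocks B C 0 0` with `B` invertible, and any such matrix
has rank equal to the size of `B`: it is `fromBlocks 1 0 0 0` times an invertible matrix.
-/

open Matrix

namespace Matrix

variable {m n p R : Type*} [Fintype m] [Fintype n] [Fintype p] [DecidableEq m] [DecidableEq p]

theorem rank_mul_eq_card_of_mul_eq_one [CommRing R] [Nontrivial R]
    {E : Matrix n m R} {F : Matrix m n R} (h : F * E = 1) : (E * F).rank = Fintype.card m := by
  refine le_antisymm ((rank_mul_le_right E F).trans (rank_le_card_height F)) ?_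
  calc Fintype.card m = (F * (E * F) * E).rank := by
        rw [← Matrix.mul_assoc, h, Matrix.one_mul, h, rank_one]
    _ ≤ (F * (E * F)).rank := rank_mul_le_left _ _
    _ ≤ (E * F).rank := rank_mul_le_right _ _

theorem rank_fromBlocks_zero_zero_of_isUnit [CommRing R] [Nontrivial R]
    {B : Matrix m m R} (C : Matrix m p R) (hB : IsUnit B) :
    (fromBlocks B C (0 : Matrix p m R) (0 : Matrix p p R)).rank = Fintype.card m := by
  have hfactor : fromBlocks B C (0 : Matrix p m R) (0 : Matrix p p R) =
      fromRows (1 : Matrix m m R) (0 : Matrix p m R) * fromCols (1 : Matrix m m R) 0 *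
        fromBlocks B C 0 1 := by
    rw [fromRows_mul_fromCols, fromBlocks_multiply]
    simp
  have hdet : IsUnit (fromBlocks B C (0 : Matrix p m R) 1).det := by
    simpa [det_fromBlocks_zero₂₁] using (isUnit_iff_isUnit_det B).mp hB
  rw [hfactor, rank_mul_eq_left_of_isUnit_det _ _ hdet]
  exact rank_mul_eq_card_of_mul_eq_one (by simp [fromCols_mul_fromRows])

theorem exists_fromBlocks_zero₂₁_pow [Semiring R]
    (T : Matrix m m R) (S : Matrix m p R) (N : Matrix p p R) (k : ℕ) :
    ∃ X : Matrix m p R, fromBlocks T S 0 N ^ k = fromBlocks (T ^ k) X 0 (N ^ k) := by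
  induction k with
  | zero => exact ⟨0, by simp [fromBlocks_one]⟩
  | succ k ih =>
    obtain ⟨X, hX⟩ := ih
    refine ⟨T * X + S * N ^ k, ?_⟩
    rw [pow_succ', hX, fromBlocks_multiply]
    simp [pow_succ']

theorem rank_units_conj [CommRing R] [DecidableEq n] (u : (Matrix n n R)ˣ) (M : Matrix n n R) :
    ((u : Matrix n n R) * M * (↑u⁻¹ : Matrix n n R)).rank = M.rank := by
  rw [rank_mul_eq_left_of_isUnit_det _ _ (isUnits_det_units u⁻¹),
    rank_mul_eq_right_of_isUnit_det _ _ (isUnits_det_units u)]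

end Matrix

theorem wg_inverse_rank_general {m p : Type*}
    [Fintype m] [Fintype p] [DecidableEq m] [DecidableEq p]
    (U : Matrix (m ⊕ p) (m ⊕ p) ℂ) (T : Matrix m m ℂ) (S : Matrix m p ℂ) (N : Matrix p p ℂ)
    (hU : U * Uᴴ = 1) (hT : IsUnit T)
    (k : ℕ) (hN : N ^ k = 0)
    (A W : Matrix (m ⊕ p) (m ⊕ p) ℂ)
    (hA : A = U * Matrix.fromBlocks T S 0 N * Uᴴ)
    (hW : W = U * Matrix.fromBlocks T⁻¹ (T⁻¹ * T⁻¹ * S) 0 0 * Uᴴ) :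
    W.rank = (A ^ k).rank := by
  let u : (Matrix (m ⊕ p) (m ⊕ p) ℂ)ˣ := ⟨U, Uᴴ, hU, mul_eq_one_comm.mp hU⟩
  obtain ⟨X, hX⟩ := exists_fromBlocks_zero₂₁_pow T S N k
  have hAk : A ^ k = (u : Matrix _ _ ℂ) * fromBlocks (T ^ k) X 0 0 * (↑u⁻¹ : Matrix _ _ ℂ) := by
    rw [hA]
    exact (Units.conj_pow u _ k).trans (by rw [hX, hN])
  have hW' : W = (u : Matrix _ _ ℂ) * fromBlocks T⁻¹ (T⁻¹ * T⁻¹ * S) 0 0 * (↑u⁻¹ : Matrix _ _ ℂ) :=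
    hW
  rw [hW', hAk, rank_units_conj, rank_units_conj,
    rank_fromBlocks_zero_zero_of_isUnit _ (isUnit_nonsing_inv_iff.mpr hT),
    rank_fromBlocks_zero_zero_of_isUnit _ (hT.pow k)]

/-- The WG inverse `W` of `A = U · fromBlocks T S 0 N · Uᴴ` (with `N^k = 0`, `k ≥ 1`)
satisfies `rank(W) = rank(A^k)`. -/
theorem wg_inverse_rank {m p : Type*}
    [Fintype m] [Fintype p] [DecidableEq m] [DecidableEq p]
    (U : Matrix (m ⊕ p) (m ⊕ p) ℂ) (T : Matrix m m ℂ) (S : Matrix m p ℂ) (N : Matrix p p ℂ)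
    (hU : U * Uᴴ = 1) (hU' : Uᴴ * U = 1) (hT : IsUnit T)
    (k : ℕ) (hk : 1 ≤ k) (hN : N ^ k = 0)
    (A W : Matrix (m ⊕ p) (m ⊕ p) ℂ)
    (hA : A = U * Matrix.fromBlocks T S 0 N * Uᴴ)
    (hW : W = U * Matrix.fromBlocks T⁻¹ (T⁻¹ * T⁻¹ * S) 0 0 * Uᴴ) :
    W.rank = (A ^ k).rank :=
  wg_inverse_rank_general U T S N hU hT k hN A W hA hW
end

section
/- Let A = U · fromBlocks T S 0 N · Uᴴ be a core-EP decomposition of the square complex matrix A, and let W = U · fromBlocks T⁻¹ (T⁻¹·T⁻¹·S) 0 0 · Uᴴ be its WG inverse. Let W₂ = U · fromBlocks (T·T)⁻¹ ((T·T)⁻¹·(T·T)⁻¹·(T·S + S·N)) 0 0 · Uᴴ be the WG inverse of A² obtained from the core-EP decomposition A² = U · fromBlocks (T·T) (T·S + S·N) 0 (N·N) · Uᴴ. Then W₂ = W² if and only if S·N = 0. -/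
open Matrix

/-- With `W` the WG inverse of `A = U · fromBlocks T S 0 N · Uᴴ` and `W₂` the WG inverse of
`A²` (from the core-EP decomposition `A² = U · fromBlocks (T·T) (T·S+S·N) 0 (N·N) · Uᴴ`),
we have `W₂ = W²` if and only if `S·N = 0`. -/
theorem wg_inverse_sq_iff {m p : Type*}
    [Fintype m] [Fintype p] [DecidableEq m] [DecidableEq p]
    (U : Matrix (m ⊕ p) (m ⊕ p) ℂ) (T : Matrix m m ℂ) (S : Matrix m p ℂ) (N : Matrix p p ℂ)
    (hU : U * Uᴴ = 1) (hU' : Uᴴ * U = 1) (hT : IsUnit T) (hN : IsNilpotent N)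
    (A W W₂ : Matrix (m ⊕ p) (m ⊕ p) ℂ)
    (hA : A = U * Matrix.fromBlocks T S 0 N * Uᴴ)
    (hW : W = U * Matrix.fromBlocks T⁻¹ (T⁻¹ * T⁻¹ * S) 0 0 * Uᴴ)
    (hW₂ : W₂ = U * Matrix.fromBlocks (T * T)⁻¹
        ((T * T)⁻¹ * (T * T)⁻¹ * (T * S + S * N)) 0 0 * Uᴴ) :
    W₂ = W ^ 2 ↔ S * N = 0 := by
  have hdet : IsUnit T.det := (Matrix.isUnit_iff_isUnit_det T).mp hT
  have hTl : T⁻¹ * T = 1 := Matrix.nonsing_inv_mul T hdet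
  have hTr : T * T⁻¹ = 1 := Matrix.mul_nonsing_inv T hdet
  have hrev : (T * T)⁻¹ = T⁻¹ * T⁻¹ := Matrix.mul_inv_rev T T
  have key : ∀ X Y : Matrix (m ⊕ p) (m ⊕ p) ℂ,
      (U * X * Uᴴ = U * Y * Uᴴ) ↔ X = Y := by
    intro X Y
    constructor
    · intro h
      have h2 := congrArg (fun M => Uᴴ * M * U) h
      simp only [Matrix.mul_assoc, hU', Matrix.mul_one] at h2
      simp only [← Matrix.mul_assoc, hU', Matrix.one_mul] at h2
      exact h2
    · rintro rfl; rfl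
  have hWsq : W ^ 2 =
      U * Matrix.fromBlocks (T⁻¹ * T⁻¹) (T⁻¹ * (T⁻¹ * T⁻¹ * S)) 0 0 * Uᴴ := by
    rw [pow_two, hW]
    have : (U * Matrix.fromBlocks T⁻¹ (T⁻¹ * T⁻¹ * S) 0 0 * Uᴴ) *
        (U * Matrix.fromBlocks T⁻¹ (T⁻¹ * T⁻¹ * S) 0 0 * Uᴴ) =
        U * (Matrix.fromBlocks T⁻¹ (T⁻¹ * T⁻¹ * S) 0 0 * (Uᴴ * U) *
          Matrix.fromBlocks T⁻¹ (T⁻¹ * T⁻¹ * S) 0 0) * Uᴴ := by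
      simp only [Matrix.mul_assoc]
    rw [this, hU', Matrix.mul_one, Matrix.fromBlocks_multiply]
    simp [Matrix.mul_assoc]
  rw [hW₂, hWsq, key, Matrix.fromBlocks_inj]
  simp only [hrev, and_true, eq_self_iff_true, true_and]
  constructor
  · intro h'
    have hx : T⁻¹ * T⁻¹ * (T⁻¹ * T⁻¹) * (T * S + S * N) =
        T⁻¹ * (T⁻¹ * T⁻¹ * S) + T⁻¹ * T⁻¹ * T⁻¹ * T⁻¹ * (S * N) := by
      rw [Matrix.mul_add]
      congr 1
      · calc T⁻¹ * T⁻¹ * (T⁻¹ * T⁻¹) * (T * S)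
            = T⁻¹ * (T⁻¹ * (T⁻¹ * ((T⁻¹ * T) * S))) := by
              simp only [Matrix.mul_assoc]
          _ = T⁻¹ * (T⁻¹ * T⁻¹ * S) := by rw [hTl]; simp [Matrix.mul_assoc]
      · simp [Matrix.mul_assoc]
    rw [hx] at h'
    have h0 : T⁻¹ * T⁻¹ * T⁻¹ * T⁻¹ * (S * N) = 0 := by
      have := congrArg (fun X => X - T⁻¹ * (T⁻¹ * T⁻¹ * S)) h'
      simpa [add_sub_cancel_left] using this
    have hcancel : ∀ x : Matrix m p ℂ, T * (T⁻¹ * x) = x := fun x => by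
      rw [← Matrix.mul_assoc, hTr, Matrix.one_mul]
    have := congrArg (fun X => T * (T * (T * (T * X)))) h0
    simpa [Matrix.mul_assoc, hcancel] using this
  · intro h
    rw [Matrix.mul_add]
    have hSN : T⁻¹ * T⁻¹ * (T⁻¹ * T⁻¹) * (S * N) = 0 := by
      simp [Matrix.mul_assoc, h]
    rw [hSN, add_zero]
    calc T⁻¹ * T⁻¹ * (T⁻¹ * T⁻¹) * (T * S)
        = T⁻¹ * (T⁻¹ * (T⁻¹ * ((T⁻¹ * T) * S))) := by simp only [Matrix.mul_assoc]
      _ = T⁻¹ * (T⁻¹ * T⁻¹ * S) := by rw [hTl]; simp [Matrix.mul_assoc]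
end

section
/- Let A = U · fromBlocks T S 0 N · Uᴴ be a core-EP decomposition of the square complex matrix A, and let W = U · fromBlocks T⁻¹ (T⁻¹·T⁻¹·S) 0 0 · Uᴴ be its WG inverse. Then A·W = W·A if and only if S·N = 0. -/
open Matrix

/-- The WG inverse `W` of `A = U · fromBlocks T S 0 N · Uᴴ` commutes with `A`
if and only if `S·N = 0`. -/
theorem wg_inverse_commute_iff {m p : Type*}
    [Fintype m] [Fintype p] [DecidableEq m] [DecidableEq p]
    (U : Matrix (m ⊕ p) (m ⊕ p) ℂ) (T : Matrix m m ℂ) (S : Matrix m p ℂ) (N : Matrix p p ℂ)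
    (hU : U * Uᴴ = 1) (hU' : Uᴴ * U = 1) (hT : IsUnit T) (hN : IsNilpotent N)
    (A W : Matrix (m ⊕ p) (m ⊕ p) ℂ)
    (hA : A = U * Matrix.fromBlocks T S 0 N * Uᴴ)
    (hW : W = U * Matrix.fromBlocks T⁻¹ (T⁻¹ * T⁻¹ * S) 0 0 * Uᴴ) :
    A * W = W * A ↔ S * N = 0 := by
  have hTd : IsUnit T.det := (Matrix.isUnit_iff_isUnit_det T).mp hT
  have hTi : T * T⁻¹ = 1 := Matrix.mul_nonsing_inv T hTd
  have hTi' : T⁻¹ * T = 1 := Matrix.nonsing_inv_mul T hTd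
  set M1 : Matrix (m ⊕ p) (m ⊕ p) ℂ := Matrix.fromBlocks T S 0 N
  set M2 : Matrix (m ⊕ p) (m ⊕ p) ℂ := Matrix.fromBlocks T⁻¹ (T⁻¹ * T⁻¹ * S) 0 0
  have key : ∀ X Y : Matrix (m ⊕ p) (m ⊕ p) ℂ,
      (U * X * Uᴴ) * (U * Y * Uᴴ) = U * (X * Y) * Uᴴ := by
    intro X Y
    calc (U * X * Uᴴ) * (U * Y * Uᴴ) = U * X * (Uᴴ * U) * Y * Uᴴ := by
          simp only [Matrix.mul_assoc]
      _ = U * (X * Y) * Uᴴ := by rw [hU']; simp only [Matrix.mul_one, Matrix.mul_assoc]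
  have cancel : ∀ X Y : Matrix (m ⊕ p) (m ⊕ p) ℂ,
      U * X * Uᴴ = U * Y * Uᴴ ↔ X = Y := by
    intro X Y
    have e : ∀ X : Matrix (m ⊕ p) (m ⊕ p) ℂ, Uᴴ * (U * X * Uᴴ) * U = X := by
      intro X
      calc Uᴴ * (U * X * Uᴴ) * U = (Uᴴ * U) * X * (Uᴴ * U) := by
            simp only [Matrix.mul_assoc]
        _ = X := by rw [hU']; simp
    constructor
    · intro h
      have := congrArg (fun Z => Uᴴ * Z * U) h
      simpa [e] using this
    · intro h; rw [h]
  have hTT : ∀ X : Matrix m p ℂ, T * (T⁻¹ * X) = X := by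
    intro X; rw [← Matrix.mul_assoc, hTi, Matrix.one_mul]
  have h12 : M1 * M2 = Matrix.fromBlocks 1 (T⁻¹ * S) 0 0 := by
    simp [M1, M2, Matrix.fromBlocks_multiply, hTi, hTT, Matrix.mul_assoc]
  have h21 : M2 * M1 = Matrix.fromBlocks 1 (T⁻¹ * S + T⁻¹ * T⁻¹ * S * N) 0 0 := by
    simp [M1, M2, Matrix.fromBlocks_multiply, hTi', Matrix.mul_assoc]
  rw [hA, hW, key, key, cancel, h12, h21]
  rw [Matrix.fromBlocks_inj]
  constructor
  · rintro ⟨-, h, -, -⟩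
    have h0 : T⁻¹ * T⁻¹ * S * N = 0 := by
      have := h.symm
      rwa [add_eq_left] at this
    have := congrArg (fun Z => T * (T * Z)) h0
    simpa [← Matrix.mul_assoc, hTi, hTT, Matrix.mul_assoc] using this
  · intro h
    refine ⟨rfl, ?_, rfl, rfl⟩
    rw [Matrix.mul_assoc, Matrix.mul_assoc, h]
    simp
end

section
/- Let A = U · fromBlocks T S 0 N · Uᴴ be a core-EP decomposition of the square complex matrix A with N^k = 0 for a natural number k ≥ 1, let W = U · fromBlocks T⁻¹ (T⁻¹·T⁻¹·S) 0 0 · Uᴴ be its WG inverse, and suppose S·N = 0. Then W is the Drazin inverse of A, i.e., W·A^(k+1) = A^k, W·A·W = W, and A·W = W·A. -/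
open Matrix

/-- If `S·N = 0`, then the WG inverse `W` of `A = U · fromBlocks T S 0 N · Uᴴ`
(with `N^k = 0`, `k ≥ 1`) is the Drazin inverse of `A`:
`W·A^(k+1) = A^k`, `W·A·W = W`, and `A·W = W·A`. -/
theorem wg_inverse_eq_drazin_of_SN_eq_zero {m p : Type*}
    [Fintype m] [Fintype p] [DecidableEq m] [DecidableEq p]
    (U : Matrix (m ⊕ p) (m ⊕ p) ℂ) (T : Matrix m m ℂ) (S : Matrix m p ℂ) (N : Matrix p p ℂ)
    (hU : U * Uᴴ = 1) (hU' : Uᴴ * U = 1) (hT : IsUnit T)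
    (k : ℕ) (hk : 1 ≤ k) (hN : N ^ k = 0) (hSN : S * N = 0)
    (A W : Matrix (m ⊕ p) (m ⊕ p) ℂ)
    (hA : A = U * Matrix.fromBlocks T S 0 N * Uᴴ)
    (hW : W = U * Matrix.fromBlocks T⁻¹ (T⁻¹ * T⁻¹ * S) 0 0 * Uᴴ) :
    W * A ^ (k + 1) = A ^ k ∧ W * A * W = W ∧ A * W = W * A := by
  have hTd : IsUnit T.det := (Matrix.isUnit_iff_isUnit_det T).mp hT
  have hTi : T⁻¹ * T = 1 := Matrix.nonsing_inv_mul T hTd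
  have hTi' : T * T⁻¹ = 1 := Matrix.mul_nonsing_inv T hTd
  set B := Matrix.fromBlocks T S 0 N with hB
  set Wb := Matrix.fromBlocks T⁻¹ (T⁻¹ * T⁻¹ * S) 0 0 with hWb
  have hconj : ∀ X Y : Matrix (m ⊕ p) (m ⊕ p) ℂ,
      (U * X * Uᴴ) * (U * Y * Uᴴ) = U * (X * Y) * Uᴴ := by
    intro X Y
    simp only [Matrix.mul_assoc]
    rw [show Uᴴ * (U * (Y * Uᴴ)) = Y * Uᴴ from by
      rw [← Matrix.mul_assoc, hU', Matrix.one_mul]]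
  have hApow : ∀ n, A ^ n = U * B ^ n * Uᴴ := by
    intro n
    induction n with
    | zero => simp [hU]
    | succ n ih => rw [pow_succ, pow_succ, ih, hA, hconj]
  have hBpow : ∀ n, B ^ (n + 1) = Matrix.fromBlocks (T ^ (n + 1)) (T ^ n * S) 0 (N ^ (n + 1)) := by
    intro n
    induction n with
    | zero => simp [hB]
    | succ n ih =>
      rw [pow_succ, ih, hB, Matrix.fromBlocks_multiply]
      have h1 : T ^ n * S * N = 0 := by rw [Matrix.mul_assoc, hSN, Matrix.mul_zero]
      rw [h1]
      simp [← pow_succ]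
  obtain ⟨j, rfl⟩ : ∃ j, k = j + 1 := ⟨k - 1, (Nat.succ_pred_eq_of_pos hk).symm⟩
  have hN1 : N ^ (j + 1 + 1) = 0 := by rw [pow_succ, hN, Matrix.zero_mul]
  have key1 : Wb * B ^ (j + 1 + 1) = B ^ (j + 1) := by
    have h2 : T⁻¹ * (T ^ (j + 1) * S) = T ^ j * S := by
      rw [pow_succ', Matrix.mul_assoc, ← Matrix.mul_assoc, hTi, Matrix.one_mul]
    have h3 : T⁻¹ * T ^ (j + 1 + 1) = T ^ (j + 1) := by
      rw [pow_succ', ← Matrix.mul_assoc, hTi, Matrix.one_mul]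
    rw [hBpow, hBpow, hWb, Matrix.fromBlocks_multiply, hN1]
    simp [h2, h3, hN]
  have hWbB : Wb * B = Matrix.fromBlocks 1 (T⁻¹ * S) 0 0 := by
    rw [hWb, hB, Matrix.fromBlocks_multiply]
    have : T⁻¹ * T⁻¹ * S * N = 0 := by rw [Matrix.mul_assoc, hSN, Matrix.mul_zero]
    simp [hTi, this]
  have hBWb : B * Wb = Matrix.fromBlocks 1 (T⁻¹ * S) 0 0 := by
    rw [hWb, hB, Matrix.fromBlocks_multiply]
    simp [hTi', ← Matrix.mul_assoc]
  have key2 : Wb * B * Wb = Wb := by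
    rw [hWbB, hWb, Matrix.fromBlocks_multiply]
    simp [Matrix.mul_assoc]
  refine ⟨?_, ?_, ?_⟩
  · rw [hW, hApow, hApow, hconj, key1]
  · rw [hW, hA, hconj, hconj, key2]
  · rw [hW, hA, hconj, hconj, hWbB, hBWb]
end

section
/- Let U be a unitary complex matrix, T an invertible square block, S a block, and set A₁ = U · fromBlocks T S 0 0 · Uᴴ with group inverse X₁ = U · fromBlocks T⁻¹ (T⁻¹·T⁻¹·S) 0 0 · Uᴴ. Let B₁ = U · fromBlocks B₁₁ B₁₂ B₂₁ B₂₂ · Uᴴ be any matrix partitioned conformally. Then A₁·X₁ = B₁·X₁ and X₁·A₁ = X₁·B₁ (i.e., A₁ is below B₁ in the sharp order) if and only if B₁₁ = T, B₂₁ = 0, and B₁₂ = S − T⁻¹·S·B₂₂. -/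
open Matrix

/-- For `A₁ = U · fromBlocks T S 0 0 · Uᴴ` with group inverse
`X₁ = U · fromBlocks T⁻¹ (T⁻¹T⁻¹S) 0 0 · Uᴴ` and any conformally partitioned
`B₁ = U · fromBlocks B₁₁ B₁₂ B₂₁ B₂₂ · Uᴴ`: `A₁ ≤# B₁` (i.e. `A₁·X₁ = B₁·X₁` and
`X₁·A₁ = X₁·B₁`) if and only if `B₁₁ = T`, `B₂₁ = 0` and `B₁₂ = S − T⁻¹·S·B₂₂`. -/
theorem sharp_order_block_char {m p : Type*}
    [Fintype m] [Fintype p] [DecidableEq m] [DecidableEq p]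
    (U : Matrix (m ⊕ p) (m ⊕ p) ℂ) (T : Matrix m m ℂ) (S : Matrix m p ℂ)
    (hU : U * Uᴴ = 1) (hU' : Uᴴ * U = 1) (hT : IsUnit T)
    (B₁₁ : Matrix m m ℂ) (B₁₂ : Matrix m p ℂ) (B₂₁ : Matrix p m ℂ) (B₂₂ : Matrix p p ℂ)
    (A₁ X₁ B₁ : Matrix (m ⊕ p) (m ⊕ p) ℂ)
    (hA₁ : A₁ = U * Matrix.fromBlocks T S 0 0 * Uᴴ)
    (hX₁ : X₁ = U * Matrix.fromBlocks T⁻¹ (T⁻¹ * T⁻¹ * S) 0 0 * Uᴴ)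
    (hB₁ : B₁ = U * Matrix.fromBlocks B₁₁ B₁₂ B₂₁ B₂₂ * Uᴴ) :
    (A₁ * X₁ = B₁ * X₁ ∧ X₁ * A₁ = X₁ * B₁) ↔
      (B₁₁ = T ∧ B₂₁ = 0 ∧ B₁₂ = S - T⁻¹ * S * B₂₂) := by
  have hdet : IsUnit T.det := (Matrix.isUnit_iff_isUnit_det T).mp hT
  have hTi : T * T⁻¹ = 1 := Matrix.mul_nonsing_inv T hdet
  have hiT : T⁻¹ * T = 1 := Matrix.nonsing_inv_mul T hdet
  have hc1 : ∀ X : Matrix (m ⊕ p) (m ⊕ p) ℂ, Uᴴ * (U * X) = X := fun X => by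
    rw [← Matrix.mul_assoc, hU', Matrix.one_mul]
  have hc2 : ∀ X : Matrix (m ⊕ p) (m ⊕ p) ℂ, U * (Uᴴ * X) = X := fun X => by
    rw [← Matrix.mul_assoc, hU, Matrix.one_mul]
  have hmul : ∀ F G : Matrix (m ⊕ p) (m ⊕ p) ℂ,
      (U * F * Uᴴ) * (U * G * Uᴴ) = U * (F * G) * Uᴴ := fun F G => by
    simp only [Matrix.mul_assoc, hc1]
  have conj : ∀ M N : Matrix (m ⊕ p) (m ⊕ p) ℂ,
      (U * M * Uᴴ = U * N * Uᴴ) ↔ M = N := fun M N => by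
    constructor
    · intro h
      have h2 := congrArg (fun Z => Uᴴ * Z * U) h
      simpa only [Matrix.mul_assoc, hc1, hc2, hU', Matrix.mul_one] using h2
    · rintro rfl; rfl
  subst hA₁ hX₁ hB₁
  rw [hmul, hmul, hmul, hmul, conj, conj, Matrix.fromBlocks_multiply,
    Matrix.fromBlocks_multiply, Matrix.fromBlocks_multiply, Matrix.fromBlocks_multiply]
  simp only [Matrix.mul_zero, Matrix.zero_mul, add_zero, zero_add,
    Matrix.fromBlocks_inj]
  constructor
  · rintro ⟨⟨e1, e2, e3, -⟩, -, e5, -, -⟩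
    have hB11 : B₁₁ = T := by
      have := congrArg (fun Z => Z * T) e1
      simpa [Matrix.mul_assoc, hiT, hTi] using this.symm
    have hB21 : B₂₁ = 0 := by
      have := congrArg (fun Z => Z * T) e3
      simpa [Matrix.mul_assoc, hiT] using this.symm
    refine ⟨hB11, hB21, ?_⟩
    -- e5 : T⁻¹ * S = T⁻¹ * B₁₂ + T⁻¹ * T⁻¹ * S * B₂₂
    have := congrArg (fun Z => T * Z) e5
    simp only [Matrix.mul_add, ← Matrix.mul_assoc, hTi, Matrix.one_mul] at this
    exact eq_sub_of_add_eq this.symm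
  · rintro ⟨rfl, rfl, rfl⟩
    refine ⟨⟨rfl, rfl, by simp, by simp⟩, ?_, ?_, by simp, by simp⟩
    · simp [hiT]
    · simp only [Matrix.mul_sub, Matrix.sub_mul, Matrix.mul_add, ← Matrix.mul_assoc, hiT,
        Matrix.one_mul]
      abel
end

section
/- Let A, B be n×n complex matrices. Then A ≤WG B if and only if there exist a unitary matrix Û, invertible square blocks T and T₁, blocks Ŝ₁, Ŝ₂, S₁, a nilpotent 2×2 block matrix fromBlocks N₁₁ N₁₂ N₂₁ N₂₂, and a nilpotent block N₂ such that A = Û · [3×3 block matrix with rows (T, Ŝ₁, Ŝ₂), (0, N₁₁, N₁₂), (0, N₂₁, N₂₂)] · Ûᴴ and B = Û · [3×3 block matrix with rows (T, Ŝ₁ − T⁻¹·Ŝ₁·T₁, Ŝ₂ − T⁻¹·Ŝ₁·S₁), (0, T₁, S₁), (0, 0, N₂)] · Ûᴴ. -/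
open Matrix

/-- `X` is a group inverse of `M`. -/
def Matrix.IsGroupInverse {n : ℕ} (M X : Matrix (Fin n) (Fin n) ℂ) : Prop :=
  M * X * M = M ∧ X * M * X = X ∧ M * X = X * M

/-- `A = A₁ + A₂` is a core-EP decomposition of `A`: `A₁` is group invertible,
`A₂` is nilpotent, `A₁ᴴ·A₂ = 0` and `A₂·A₁ = 0`. -/
def Matrix.IsCoreEPDecomposition {n : ℕ} (A A₁ A₂ : Matrix (Fin n) (Fin n) ℂ) : Prop :=
  A = A₁ + A₂ ∧ (∃ X, Matrix.IsGroupInverse A₁ X) ∧ IsNilpotent A₂ ∧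
    A₁ᴴ * A₂ = 0 ∧ A₂ * A₁ = 0

/-- The WG order: the core parts of the core-EP decompositions of `A` and `B` are
comparable under the sharp order. -/
def Matrix.WGLE {n : ℕ} (A B : Matrix (Fin n) (Fin n) ℂ) : Prop :=
  ∃ A₁ A₂ B₁ B₂ X : Matrix (Fin n) (Fin n) ℂ,
    Matrix.IsCoreEPDecomposition A A₁ A₂ ∧ Matrix.IsCoreEPDecomposition B B₁ B₂ ∧
    Matrix.IsGroupInverse A₁ X ∧ A₁ * X = B₁ * X ∧ X * A₁ = X * B₁

/-!
After a unitary change of basis adapted to `range A₁ ⊕ (range A₁)ᗮ`, a core-EP decomposition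
`A = A₁ + A₂` becomes `[T S; 0 N] = [T S; 0 0] + [0 0; 0 N]` with `N` nilpotent, and `T` is
invertible because `A₁` has index one. Given a group inverse, the sharp order `A₁ ≤# B₁` amounts
to `A₁² = B₁ A₁ = A₁ B₁`, which in this basis forces `B₁ = [T, S - T⁻¹ S D; 0, D]`. The
orthogonality conditions on `B = B₁ + B₂` then give `B₂ = [0 0; 0 F]` with `D + F` a core-EP
decomposition of the lower right block, and splitting that block by a second unitary change of
basis yields the three-by-three form. Conversely, block triangular matrices of this shape have
explicit group inverses, so the evident splittings are core-EP decompositions whose core parts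
are in sharp order.
-/

def IsGroupInv {M : Type*} [Mul M] (a x : M) : Prop :=
  a * x * a = a ∧ x * a * x = x ∧ a * x = x * a

namespace IsGroupInv

variable {M : Type*} {a x : M}

theorem map [Mul M] {N F : Type*} [Mul N] [FunLike F M N] [MulHomClass F M N]
    (h : IsGroupInv a x) (f : F) : IsGroupInv (f a) (f x) := by
  obtain ⟨h₁, h₂, h₃⟩ := h
  exact ⟨by rw [← map_mul, ← map_mul, h₁], by rw [← map_mul, ← map_mul, h₂],
    by rw [← map_mul, ← map_mul, h₃]⟩

variable [Semigroup M]

theorem inv_mul_mul_self (h : IsGroupInv a x) : x * (a * a) = a := by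
  rw [← mul_assoc, ← h.2.2, h.1]

theorem mul_self_mul_inv (h : IsGroupInv a x) : a * a * x = a := by
  rw [mul_assoc, h.2.2, ← mul_assoc, h.1]

/-- With `b = a`, this and `mul_left_eq_iff` turn the sharp order `a ≤# c` into
`a² = c a = a c`. -/
theorem mul_right_eq_iff (h : IsGroupInv a x) {b c : M} : b * x = c * x ↔ b * a = c * a := by
  constructor <;> intro hbc
  · rw [← h.inv_mul_mul_self, ← mul_assoc, hbc, mul_assoc]
  · have hx : a * (x * x) = x := by rw [← mul_assoc, h.2.2, h.2.1]
    rw [← hx, ← mul_assoc, hbc, mul_assoc]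

theorem mul_left_eq_iff (h : IsGroupInv a x) {b c : M} : x * b = x * c ↔ a * b = a * c := by
  constructor <;> intro hbc
  · rw [← h.mul_self_mul_inv, mul_assoc, hbc, ← mul_assoc]
  · have hx : x * x * a = x := by rw [mul_assoc, ← h.2.2, ← mul_assoc, h.2.1]
    rw [← hx, mul_assoc, hbc, ← mul_assoc]

end IsGroupInv

theorem isGroupInv_zero {M : Type*} [MulZeroClass M] : IsGroupInv (0 : M) 0 := by
  simp [IsGroupInv]

def IsCoreEP {R : Type*} [Semiring R] [Star R] (a a₁ a₂ : R) : Prop :=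
  a = a₁ + a₂ ∧ (∃ x, IsGroupInv a₁ x) ∧ IsNilpotent a₂ ∧ star a₁ * a₂ = 0 ∧ a₂ * a₁ = 0

theorem IsCoreEP.map {R S : Type*} [Semiring R] [Star R] [Semiring S] [Star S] {a a₁ a₂ : R}
    (h : IsCoreEP a a₁ a₂) (f : R ≃⋆+* S) : IsCoreEP (f a) (f a₁) (f a₂) := by
  obtain ⟨hsum, ⟨x, hx⟩, hnil, h₁₂, h₂₁⟩ := h
  refine ⟨by rw [hsum, map_add], ⟨f x, hx.map f⟩, hnil.map f, ?_, ?_⟩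
  · rw [← map_star, ← map_mul, h₁₂, map_zero]
  · rw [← map_mul, h₂₁, map_zero]

theorem IsNilpotent.isCoreEP_zero {R : Type*} [Semiring R] [StarRing R] {a : R}
    (h : IsNilpotent a) : IsCoreEP a 0 a :=
  ⟨(zero_add a).symm, ⟨0, isGroupInv_zero⟩, h, by simp, by simp⟩

namespace Matrix

section UnitaryConj

variable {R : Type*} [CommRing R] [StarRing R] {l m : Type*} [Fintype l] [Fintype m]
  [DecidableEq l] [DecidableEq m]

def unitaryConj (U : Matrix m l R) (h₁ : U * Uᴴ = 1) (h₂ : Uᴴ * U = 1) :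
    Matrix l l R ≃⋆+* Matrix m m R where
  toFun M := U * M * Uᴴ
  invFun M := Uᴴ * M * U
  left_inv M := show Uᴴ * (U * M * Uᴴ) * U = M by
    rw [show Uᴴ * (U * M * Uᴴ) * U = (Uᴴ * U) * M * (Uᴴ * U) by simp only [Matrix.mul_assoc], h₂,
      Matrix.one_mul, Matrix.mul_one]
  right_inv M := show U * (Uᴴ * M * U) * Uᴴ = M by
    rw [show U * (Uᴴ * M * U) * Uᴴ = (U * Uᴴ) * M * (U * Uᴴ) by simp only [Matrix.mul_assoc], h₁,
      Matrix.one_mul, Matrix.mul_one]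
  map_mul' M N := by simp only [Matrix.mul_assoc, ← Matrix.mul_assoc Uᴴ, h₂, Matrix.one_mul]
  map_add' M N := by simp only [Matrix.mul_add, Matrix.add_mul]
  map_star' M := by
    simp only [star_eq_conjTranspose, conjTranspose_mul, conjTranspose_conjTranspose,
      Matrix.mul_assoc]

@[simp]
theorem unitaryConj_apply (U : Matrix m l R) (h₁ : U * Uᴴ = 1) (h₂ : Uᴴ * U = 1)
    (M : Matrix l l R) : unitaryConj U h₁ h₂ M = U * M * Uᴴ := rfl

@[simp]
theorem unitaryConj_symm_apply (U : Matrix m l R) (h₁ : U * Uᴴ = 1) (h₂ : Uᴴ * U = 1)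
    (M : Matrix m m R) : (unitaryConj U h₁ h₂).symm M = Uᴴ * M * U := rfl

end UnitaryConj

section Blocks

variable {R : Type*} [CommRing R] {k₁ k₂ : Type*} [Fintype k₁] [Fintype k₂] [DecidableEq k₁]

def HasIndexLeOne {ι : Type*} [Fintype ι] (M : Matrix ι ι R) : Prop :=
  ∀ v, M *ᵥ (M *ᵥ v) = 0 → M *ᵥ v = 0

theorem _root_.IsGroupInv.hasIndexLeOne {ι : Type*} [Fintype ι] {M X : Matrix ι ι R}
    (h : IsGroupInv M X) : M.HasIndexLeOne := by
  intro v hv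
  rw [← h.inv_mul_mul_self, ← mulVec_mulVec, ← mulVec_mulVec, hv, mulVec_zero]

theorem HasIndexLeOne.of_fromBlocks {T : Matrix k₁ k₁ R} {c : Matrix k₁ k₂ R}
    {D : Matrix k₂ k₂ R} (hT : IsUnit T) (h : (fromBlocks T c 0 D).HasIndexLeOne) :
    D.HasIndexLeOne := by
  intro x hx
  let _ := hT.invertible
  -- the upper part of `u` is chosen to kill the upper part of `(fromBlocks T c 0 D)² u`
  set u : k₁ ⊕ k₂ → R := Sum.elim (-(T⁻¹ *ᵥ (c *ᵥ x + T⁻¹ *ᵥ (c *ᵥ (D *ᵥ x))))) x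
  have hu : fromBlocks T c 0 D *ᵥ u = Sum.elim (-(T⁻¹ *ᵥ (c *ᵥ (D *ᵥ x)))) (D *ᵥ x) := by
    simp [u, fromBlocks_mulVec, mulVec_neg, mulVec_add, mulVec_mulVec]
  have huu : fromBlocks T c 0 D *ᵥ (fromBlocks T c 0 D *ᵥ u) = 0 := by
    rw [hu]
    ext (i | i) <;> simp [fromBlocks_mulVec, mulVec_neg, mulVec_mulVec, hx]
  funext i
  simpa [hu] using congrFun (h u huu) (Sum.inr i)

theorem isNilpotent_fromBlocks_zero_iff [DecidableEq k₂] {N : Matrix k₂ k₂ R} :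
    IsNilpotent (fromBlocks (0 : Matrix k₁ k₁ R) 0 0 N) ↔ IsNilpotent N := by
  have hpow (j : ℕ) :
      fromBlocks (0 : Matrix k₁ k₁ R) 0 0 N ^ (j + 1) = fromBlocks 0 0 0 (N ^ (j + 1)) := by
    induction j with
    | zero => simp
    | succ j ih => rw [pow_succ, ih, fromBlocks_multiply]; simp [pow_succ]
  constructor
  · rintro ⟨j, hj⟩
    have := hpow j
    rw [pow_succ, hj, Matrix.zero_mul, eq_comm, ← fromBlocks_zero, fromBlocks_inj] at this
    exact ⟨j + 1, this.2.2.2⟩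
  · rintro ⟨j, hj⟩
    exact ⟨j + 1, by rw [hpow, pow_succ, hj, Matrix.zero_mul, fromBlocks_zero]⟩

theorem isGroupInv_fromBlocks [DecidableEq k₂] {a : Matrix k₁ k₁ R} {b b' : Matrix k₂ k₂ R}
    (ha : IsUnit a) (hb : IsGroupInv b b') (c : Matrix k₁ k₂ R) :
    IsGroupInv (fromBlocks a c 0 b)
      (fromBlocks a⁻¹ (a⁻¹ * (a⁻¹ * c * (1 - b * b') - c * b')) 0 b') := by
  obtain ⟨hb₁, hb₂, hb₃⟩ := hb
  let _ := ha.invertible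
  set P := 1 - b * b'
  set W := a⁻¹ * c * P
  have hPb : P * b = 0 := by rw [Matrix.sub_mul, Matrix.one_mul, hb₁, sub_self]
  have hPb' : P * b' = 0 := by rw [Matrix.sub_mul, Matrix.one_mul, hb₃, hb₂, sub_self]
  have hWb : W * b = 0 := by rw [Matrix.mul_assoc, hPb, Matrix.mul_zero]
  have hWb' : W * b' = 0 := by rw [Matrix.mul_assoc, hPb', Matrix.mul_zero]
  have hMY : a * (a⁻¹ * (W - c * b')) + c * b' = W := by
    rw [mul_inv_cancel_left_of_invertible, sub_add_cancel]
  have hYM : a⁻¹ * c + a⁻¹ * (W - c * b') * b = W := by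
    rw [Matrix.mul_assoc a⁻¹, Matrix.sub_mul, hWb, zero_sub, Matrix.mul_assoc c, ← hb₃,
      Matrix.mul_neg, ← sub_eq_add_neg]
    simp only [W, P, Matrix.mul_sub, Matrix.mul_one, Matrix.mul_assoc]
  refine ⟨?_, ?_, ?_⟩
  · simp only [fromBlocks_multiply, Matrix.mul_zero, Matrix.zero_mul, add_zero, zero_add, hMY,
      mul_inv_of_invertible, Matrix.one_mul, hWb, hb₁]
  · simp only [fromBlocks_multiply, Matrix.mul_zero, Matrix.zero_mul, add_zero, zero_add, hYM,
      inv_mul_of_invertible, Matrix.one_mul, hWb', hb₂]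
  · simp only [fromBlocks_multiply, Matrix.mul_zero, Matrix.zero_mul, add_zero, zero_add, hYM,
      hMY, inv_mul_of_invertible, mul_inv_of_invertible, hb₃]

theorem fromBlocks_mul_self_eq_mul_iff {T : Matrix k₁ k₁ R} (hT : IsUnit T)
    (S : Matrix k₁ k₂ R) (C : Matrix (k₁ ⊕ k₂) (k₁ ⊕ k₂) R) :
    (fromBlocks T S 0 (0 : Matrix k₂ k₂ R) * fromBlocks T S 0 (0 : Matrix k₂ k₂ R) =
        C * fromBlocks T S 0 (0 : Matrix k₂ k₂ R) ∧
      fromBlocks T S 0 (0 : Matrix k₂ k₂ R) * fromBlocks T S 0 (0 : Matrix k₂ k₂ R) =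
        fromBlocks T S 0 (0 : Matrix k₂ k₂ R) * C) ↔
      ∃ D, C = fromBlocks T (S - T⁻¹ * S * D) 0 D := by
  let _ := hT.invertible
  constructor
  · rintro ⟨h₁, h₂⟩
    rw [← fromBlocks_toBlocks C] at h₁ h₂ ⊢
    simp only [fromBlocks_multiply, Matrix.mul_zero, Matrix.zero_mul, add_zero] at h₁ h₂
    obtain ⟨h₁₁, -, h₂₁, -⟩ := fromBlocks_inj.1 h₁
    obtain ⟨-, h₁₂, -, -⟩ := fromBlocks_inj.1 h₂
    refine ⟨C.toBlocks₂₂, fromBlocks_inj.2 ⟨?_, ?_, ?_, rfl⟩⟩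
    · simpa using congrArg (· * T⁻¹) h₁₁.symm
    · rw [eq_sub_iff_add_eq]
      simpa [Matrix.mul_add, Matrix.mul_assoc] using congrArg (T⁻¹ * ·) h₁₂.symm
    · simpa using congrArg (· * T⁻¹) h₂₁.symm
  · rintro ⟨D, rfl⟩
    simp [fromBlocks_multiply, Matrix.mul_sub, ← Matrix.mul_assoc]

variable [StarRing R] [DecidableEq k₂]

theorem _root_.IsCoreEP.fromBlocks {a : Matrix k₁ k₁ R} {M D F : Matrix k₂ k₂ R}
    (ha : IsUnit a) (h : IsCoreEP M D F) (c : Matrix k₁ k₂ R) :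
    IsCoreEP (fromBlocks a c 0 M) (fromBlocks a c 0 D) (fromBlocks 0 0 0 F) := by
  obtain ⟨rfl, ⟨D', hD'⟩, hF, hDF, hFD⟩ := h
  refine ⟨by simp [fromBlocks_add], ⟨_, isGroupInv_fromBlocks ha hD' c⟩,
    isNilpotent_fromBlocks_zero_iff.2 hF, ?_, ?_⟩
  · rw [star_eq_conjTranspose] at hDF
    simp [star_eq_conjTranspose, fromBlocks_conjTranspose, fromBlocks_multiply, hDF]
  · simp [fromBlocks_multiply, hFD]

theorem _root_.IsCoreEP.exists_of_fromBlocks {T : Matrix k₁ k₁ R} {c : Matrix k₁ k₂ R}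
    {D : Matrix k₂ k₂ R} {M G : Matrix (k₁ ⊕ k₂) (k₁ ⊕ k₂) R} (hT : IsUnit T)
    (h : IsCoreEP M (fromBlocks T c 0 D) G) :
    ∃ F, M = fromBlocks T c 0 (D + F) ∧ D.HasIndexLeOne ∧ IsNilpotent F ∧ Dᴴ * F = 0 ∧
      F * D = 0 := by
  obtain ⟨rfl, ⟨_, hC⟩, hG, hCG, hGC⟩ := h
  let _ := hT.invertible
  rw [← fromBlocks_toBlocks G] at hG hCG hGC ⊢
  rw [star_eq_conjTranspose, fromBlocks_conjTranspose, fromBlocks_multiply, ← fromBlocks_zero,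
    fromBlocks_inj] at hCG
  rw [fromBlocks_multiply, ← fromBlocks_zero, fromBlocks_inj] at hGC
  obtain ⟨h₁₁, h₁₂, -, h₂₂⟩ := hCG
  obtain ⟨-, -, h₂₁, h₂₂'⟩ := hGC
  simp only [Matrix.mul_zero, add_zero] at h₁₁ h₁₂ h₂₁
  have hG₁₁ : G.toBlocks₁₁ = 0 := by simpa using congrArg (Tᴴ⁻¹ * ·) h₁₁
  have hG₁₂ : G.toBlocks₁₂ = 0 := by simpa using congrArg (Tᴴ⁻¹ * ·) h₁₂
  have hG₂₁ : G.toBlocks₂₁ = 0 := by simpa using congrArg (· * T⁻¹) h₂₁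
  rw [hG₁₁, hG₁₂, hG₂₁] at hG ⊢
  rw [hG₁₂, Matrix.mul_zero, zero_add] at h₂₂
  rw [hG₂₁, Matrix.zero_mul, zero_add] at h₂₂'
  exact ⟨_, by rw [fromBlocks_add]; simp, hC.hasIndexLeOne.of_fromBlocks hT,
    isNilpotent_fromBlocks_zero_iff.1 hG, h₂₂, h₂₂'⟩

end Blocks

theorem conjTranspose_fromCols_mul_mul_fromCols {R : Type*} [CommRing R] [StarRing R]
    {ι k₁ k₂ : Type*} [Fintype ι] (V₁ : Matrix ι k₁ R) (V₂ : Matrix ι k₂ R)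
    (M : Matrix ι ι R) :
    (fromCols V₁ V₂)ᴴ * M * fromCols V₁ V₂ =
      fromBlocks (V₁ᴴ * M * V₁) (V₁ᴴ * M * V₂) (V₂ᴴ * M * V₁) (V₂ᴴ * M * V₂) := by
  rw [conjTranspose_fromCols_eq_fromRows_conjTranspose, fromRows_mul, fromRows_mul_fromCols]

theorem fromCols_sub_mul_fromCols_mul_fromBlocks {R : Type*} [CommRing R] {l k₁ k₂ : Type*}
    [Fintype l] [Fintype k₁] [Fintype k₂] (M : Matrix l l R)
    (a : Matrix l k₁ R) (b : Matrix l k₂ R) (c : Matrix k₁ k₁ R) (d : Matrix k₁ k₂ R) :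
    fromCols a b - M * fromCols a b * fromBlocks c d 0 (0 : Matrix k₂ k₂ R) =
      fromCols (a - M * a * c) (b - M * a * d) := by
  rw [mul_fromCols, fromCols_mul_fromBlocks]
  ext i (j | j) <;> simp

theorem fromBlocks_one_zero_zero_conj {R : Type*} [CommRing R] [StarRing R]
    {k l l' : Type*} [Fintype k] [Fintype l] [Fintype l'] [DecidableEq k]
    (V : Matrix l l' R) (a : Matrix k k R) (b : Matrix k l' R) (d : Matrix l' l' R) :
    fromBlocks (1 : Matrix k k R) 0 0 V * fromBlocks a b 0 d *
      (fromBlocks (1 : Matrix k k R) 0 0 V)ᴴ =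
      fromBlocks a (b * Vᴴ) 0 (V * d * Vᴴ) := by
  rw [fromBlocks_conjTranspose, fromBlocks_multiply, fromBlocks_multiply]
  simp [Matrix.mul_assoc]

theorem mul_fromBlocks_one_zero_zero_conj {R : Type*} [CommRing R] [StarRing R]
    {m k l l' : Type*} [Fintype k] [Fintype l] [Fintype l'] [Fintype m] [DecidableEq k]
    (U : Matrix m (k ⊕ l) R) (V : Matrix l l' R) (a : Matrix k k R) (b : Matrix k l' R)
    (d : Matrix l' l' R) :
    U * fromBlocks (1 : Matrix k k R) 0 0 V * fromBlocks a b 0 d *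
      (U * fromBlocks (1 : Matrix k k R) 0 0 V)ᴴ =
      U * fromBlocks a (b * Vᴴ) 0 (V * d * Vᴴ) * Uᴴ := by
  rw [conjTranspose_mul, ← fromBlocks_one_zero_zero_conj]
  simp only [Matrix.mul_assoc]

theorem mul_fromBlocks_one_zero_zero_unitary {R : Type*} [CommRing R] [StarRing R]
    {m k l l' : Type*} [Fintype k] [Fintype l] [Fintype l'] [Fintype m] [DecidableEq k]
    [DecidableEq l] [DecidableEq l'] [DecidableEq m] {U : Matrix m (k ⊕ l) R}
    {V : Matrix l l' R} (hU₁ : U * Uᴴ = 1) (hU₂ : Uᴴ * U = 1) (hV₁ : V * Vᴴ = 1)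
    (hV₂ : Vᴴ * V = 1) :
    U * fromBlocks (1 : Matrix k k R) 0 0 V * (U * fromBlocks (1 : Matrix k k R) 0 0 V)ᴴ = 1 ∧
      (U * fromBlocks (1 : Matrix k k R) 0 0 V)ᴴ * (U * fromBlocks (1 : Matrix k k R) 0 0 V) = 1 := by
  constructor
  · simpa [hV₁, hU₁] using mul_fromBlocks_one_zero_zero_conj U V 1 0 1
  · simp [Matrix.mul_assoc, ← Matrix.mul_assoc Uᴴ, hU₂, fromBlocks_conjTranspose,
      fromBlocks_multiply, hV₂]

theorem isUnit_conjTranspose_mul_mul_of_hasIndexLeOne {K : Type*} [Field K] [StarRing K]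
    {ι κ : Type*} [Fintype ι] [Fintype κ] [DecidableEq κ] {M : Matrix ι ι K}
    {V Z : Matrix ι κ K} (hM : M.HasIndexLeOne) (hV : Vᴴ * V = 1) (hVZ : V = M * Z)
    (hMV : M * V = V * (Vᴴ * M * V)) : IsUnit (Vᴴ * M * V) := by
  rw [isUnit_iff_isUnit_det, isUnit_iff_ne_zero, ne_eq, ← exists_mulVec_eq_zero_iff]
  rintro ⟨y, hy, hTy⟩
  have hMZ : M *ᵥ (M *ᵥ (Z *ᵥ y)) = 0 := by
    rw [mulVec_mulVec y M Z, ← hVZ, mulVec_mulVec, hMV, ← mulVec_mulVec, hTy, mulVec_zero]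
  have hVy : V *ᵥ y = 0 := by rw [hVZ, ← mulVec_mulVec, hM _ hMZ]
  exact hy (by rw [← one_mulVec y, ← hV, ← mulVec_mulVec, hVy, mulVec_zero])

section RCLike

variable {𝕜 : Type*} [RCLike 𝕜] {ι : Type*} [Fintype ι]

theorem conjTranspose_mul_self_of_orthonormal {κ : Type*} [Fintype κ] [DecidableEq κ]
    {v : κ → EuclideanSpace 𝕜 ι} (hv : Orthonormal 𝕜 v) :
    (of fun a i => v i a)ᴴ * of (fun a i => v i a) = 1 := by
  ext i j
  have := orthonormal_iff_ite.1 hv i j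
  rw [EuclideanSpace.inner_eq_star_dotProduct] at this
  simpa [mul_apply, one_apply, dotProduct, mul_comm] using this

variable [DecidableEq ι]

theorem exists_unitary_fromCols_range (M : Matrix ι ι 𝕜) :
    ∃ (p r : ℕ) (V₁ Z : Matrix ι (Fin p) 𝕜) (V₂ : Matrix ι (Fin r) 𝕜),
      fromCols V₁ V₂ * (fromCols V₁ V₂)ᴴ = 1 ∧ (fromCols V₁ V₂)ᴴ * fromCols V₁ V₂ = 1 ∧
      V₁ = M * Z ∧ V₂ᴴ * M = 0 := by
  set W := LinearMap.range (toEuclideanLin M)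
  let b₁ := stdOrthonormalBasis 𝕜 W
  let b₂ := stdOrthonormalBasis 𝕜 Wᗮ
  choose x hx using fun i => (b₁ i).2
  set V₁ : Matrix ι (Fin _) 𝕜 := of fun a i => (b₁ i : EuclideanSpace 𝕜 ι) a
  set V₂ : Matrix ι (Fin _) 𝕜 := of fun a i => (b₂ i : EuclideanSpace 𝕜 ι) a
  have hV₁ : V₁ = M * of fun a i => x i a := by
    ext a i
    simp only [V₁, of_apply, ← hx i]
    rfl
  have hV₂ : V₂ᴴ * M = 0 := by
    ext j a
    have := Submodule.inner_left_of_mem_orthogonal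
      (LinearMap.mem_range_self (toEuclideanLin M) (EuclideanSpace.single a 1)) (b₂ j).2
    rw [EuclideanSpace.inner_eq_star_dotProduct] at this
    simpa [V₂, mul_apply, dotProduct, mulVec, Pi.single_apply, mul_comm] using this
  have hV₁V₁ : V₁ᴴ * V₁ = 1 :=
    conjTranspose_mul_self_of_orthonormal (b₁.orthonormal.comp_linearIsometry W.subtypeₗᵢ)
  have hV₂V₂ : V₂ᴴ * V₂ = 1 :=
    conjTranspose_mul_self_of_orthonormal (b₂.orthonormal.comp_linearIsometry Wᗮ.subtypeₗᵢ)
  have hV₂V₁ : V₂ᴴ * V₁ = 0 := by rw [hV₁, ← Matrix.mul_assoc, hV₂, Matrix.zero_mul]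
  have hV₁V₂ : V₁ᴴ * V₂ = 0 := by simpa using congrArg conjTranspose hV₂V₁
  have hVV : (fromCols V₁ V₂)ᴴ * fromCols V₁ V₂ = 1 := by
    rw [conjTranspose_fromCols_eq_fromRows_conjTranspose, fromRows_mul_fromCols, hV₁V₁, hV₁V₂,
      hV₂V₁, hV₂V₂, fromBlocks_one]
  have hcard : Fintype.card ι =
      Fintype.card (Fin (Module.finrank 𝕜 W) ⊕ Fin (Module.finrank 𝕜 Wᗮ)) := by
    simp [Submodule.finrank_add_finrank_orthogonal, finrank_euclideanSpace]
  refine ⟨_, _, V₁, _, V₂, ?_, hVV, hV₁, hV₂⟩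
  rw [conjTranspose_fromCols_eq_fromRows_conjTranspose] at hVV ⊢
  exact (fromCols_mul_fromRows_eq_one_comm (Fintype.equivOfCardEq hcard) _ _ _ _).2 hVV

theorem exists_unitary_conj_fromBlocks {M₁ M₂ : Matrix ι ι 𝕜} (h₁ : M₁.HasIndexLeOne)
    (h₂ : IsNilpotent M₂) (h₁₂ : M₁ᴴ * M₂ = 0) (h₂₁ : M₂ * M₁ = 0) :
    ∃ (p r : ℕ) (V : Matrix ι (Fin p ⊕ Fin r) 𝕜) (T : Matrix (Fin p) (Fin p) 𝕜)
      (S : Matrix (Fin p) (Fin r) 𝕜) (N : Matrix (Fin r) (Fin r) 𝕜),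
      V * Vᴴ = 1 ∧ Vᴴ * V = 1 ∧ IsUnit T ∧ IsNilpotent N ∧
      M₁ = V * fromBlocks T S 0 (0 : Matrix (Fin r) (Fin r) 𝕜) * Vᴴ ∧
      M₂ = V * fromBlocks (0 : Matrix (Fin p) (Fin p) 𝕜) 0 0 N * Vᴴ := by
  obtain ⟨p, r, V₁, Z, V₂, hV, hV', hVZ, hV₂M⟩ := exists_unitary_fromCols_range M₁
  set Φ := unitaryConj (fromCols V₁ V₂) hV hV'
  have hM₁ : Φ.symm M₁ = fromBlocks (V₁ᴴ * M₁ * V₁) (V₁ᴴ * M₁ * V₂) 0 0 := by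
    rw [unitaryConj_symm_apply, conjTranspose_fromCols_mul_mul_fromCols, hV₂M]
    simp
  have hM₂ : Φ.symm M₂ = fromBlocks 0 0 0 (V₂ᴴ * M₂ * V₂) := by
    have hV₁M₂ : V₁ᴴ * M₂ = 0 := by
      rw [hVZ, conjTranspose_mul, Matrix.mul_assoc, h₁₂, Matrix.mul_zero]
    have hM₂V₁ : M₂ * V₁ = 0 := by rw [hVZ, ← Matrix.mul_assoc, h₂₁, Matrix.zero_mul]
    rw [unitaryConj_symm_apply, conjTranspose_fromCols_mul_mul_fromCols, hV₁M₂,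
      Matrix.mul_assoc, hM₂V₁]
    simp
  have hT : IsUnit (V₁ᴴ * M₁ * V₁) := by
    rw [conjTranspose_fromCols_eq_fromRows_conjTranspose, fromRows_mul_fromCols,
      ← fromBlocks_one, fromBlocks_inj] at hV'
    refine isUnit_conjTranspose_mul_mul_of_hasIndexLeOne h₁ hV'.1 hVZ ?_
    calc M₁ * V₁ = (V₁ * V₁ᴴ + V₂ * V₂ᴴ) * M₁ * V₁ := by
          rw [← fromCols_mul_fromRows, ← conjTranspose_fromCols_eq_fromRows_conjTranspose, hV,
            Matrix.one_mul]
      _ = V₁ * (V₁ᴴ * M₁ * V₁) := by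
          rw [Matrix.add_mul, Matrix.add_mul, Matrix.mul_assoc V₂, hV₂M]
          simp [Matrix.mul_assoc]
  refine ⟨p, r, fromCols V₁ V₂, _, V₁ᴴ * M₁ * V₂, V₂ᴴ * M₂ * V₂, hV, hV', hT, ?_, ?_, ?_⟩
  · rw [← isNilpotent_fromBlocks_zero_iff (k₁ := Fin p), ← hM₂]
    exact h₂.map Φ.symm
  · rw [← hM₁]
    exact (Φ.apply_symm_apply M₁).symm
  · rw [← hM₂]
    exact (Φ.apply_symm_apply M₂).symm

end RCLike

section Complex

variable {n : ℕ}

theorem isGroupInverse_iff {M X : Matrix (Fin n) (Fin n) ℂ} :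
    M.IsGroupInverse X ↔ IsGroupInv M X := Iff.rfl

theorem isCoreEPDecomposition_iff {A A₁ A₂ : Matrix (Fin n) (Fin n) ℂ} :
    A.IsCoreEPDecomposition A₁ A₂ ↔ IsCoreEP A A₁ A₂ := Iff.rfl

theorem WGLE.exists_conj_fromBlocks {A B : Matrix (Fin n) (Fin n) ℂ} (h : A.WGLE B) :
    ∃ (p m : ℕ) (U : Matrix (Fin n) (Fin p ⊕ Fin m) ℂ) (T : Matrix (Fin p) (Fin p) ℂ)
      (S : Matrix (Fin p) (Fin m) ℂ) (N D F : Matrix (Fin m) (Fin m) ℂ),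
      U * Uᴴ = 1 ∧ Uᴴ * U = 1 ∧ IsUnit T ∧ IsNilpotent N ∧ D.HasIndexLeOne ∧ IsNilpotent F ∧
      Dᴴ * F = 0 ∧ F * D = 0 ∧ A = U * fromBlocks T S 0 N * Uᴴ ∧
      B = U * fromBlocks T (S - T⁻¹ * S * D) 0 (D + F) * Uᴴ := by
  obtain ⟨A₁, A₂, B₁, B₂, X, ⟨rfl, -, hA₂, hA₁₂, hA₂₁⟩, hB, hX, hAX, hXA⟩ := h
  rw [isGroupInverse_iff] at hX
  obtain ⟨p, m, U, T, S, N, hU₁, hU₂, hT, hN, rfl, rfl⟩ :=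
    exists_unitary_conj_fromBlocks hX.hasIndexLeOne hA₂ hA₁₂ hA₂₁
  set Φ := unitaryConj U hU₁ hU₂
  set K := fromBlocks T S 0 (0 : Matrix (Fin m) (Fin m) ℂ)
  have h₁ : Φ K * Φ K = B₁ * Φ K := hX.mul_right_eq_iff.1 hAX
  have h₂ : Φ K * Φ K = Φ K * B₁ := hX.mul_left_eq_iff.1 hXA
  have hsharp : K * K = Φ.symm B₁ * K ∧ K * K = K * Φ.symm B₁ :=
    ⟨by simpa only [map_mul, Φ.symm_apply_apply] using congrArg Φ.symm h₁,
      by simpa only [map_mul, Φ.symm_apply_apply] using congrArg Φ.symm h₂⟩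
  obtain ⟨D, hC⟩ := (fromBlocks_mul_self_eq_mul_iff hT S _).1 hsharp
  have hB' := (isCoreEPDecomposition_iff.1 hB).map Φ.symm
  rw [hC] at hB'
  obtain ⟨F, hBF, hD, hF, hDF, hFD⟩ := hB'.exists_of_fromBlocks hT
  refine ⟨p, m, U, T, S, N, D, F, hU₁, hU₂, hT, hN, hD, hF, hDF, hFD, ?_, ?_⟩
  · rw [← Matrix.add_mul, ← Matrix.mul_add, fromBlocks_add]
    simp
  · rw [← hBF]
    exact (Φ.apply_symm_apply B).symm

theorem wgle_conj_fromBlocks {p : ℕ} {ι : Type*} [Fintype ι] [DecidableEq ι]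
    {U : Matrix (Fin n) (Fin p ⊕ ι) ℂ} (hU₁ : U * Uᴴ = 1) (hU₂ : Uᴴ * U = 1)
    {T : Matrix (Fin p) (Fin p) ℂ} (hT : IsUnit T) (S : Matrix (Fin p) ι ℂ)
    {N M D F : Matrix ι ι ℂ} (hN : IsNilpotent N) (hM : IsCoreEP M D F) :
    (U * fromBlocks T S 0 N * Uᴴ).WGLE (U * fromBlocks T (S - T⁻¹ * S * D) 0 M * Uᴴ) := by
  set Φ := unitaryConj U hU₁ hU₂
  have hK := isGroupInv_fromBlocks hT isGroupInv_zero S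
  obtain ⟨h₁, h₂⟩ := (fromBlocks_mul_self_eq_mul_iff hT S _).2 ⟨D, rfl⟩
  refine ⟨Φ (fromBlocks T S 0 0), Φ (fromBlocks 0 0 0 N), Φ (fromBlocks T (S - T⁻¹ * S * D) 0 D),
    Φ (fromBlocks 0 0 0 F), Φ _, isCoreEPDecomposition_iff.2 ((hN.isCoreEP_zero.fromBlocks hT S).map Φ),
    isCoreEPDecomposition_iff.2 ((hM.fromBlocks hT _).map Φ), hK.map Φ, ?_, ?_⟩
  · rw [← map_mul, ← map_mul, hK.mul_right_eq_iff.2 h₁]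
  · rw [← map_mul, ← map_mul, hK.mul_left_eq_iff.2 h₂]

end Complex

end Matrix

/-- Characterization of the WG order via simultaneous block decompositions. -/
theorem wgle_iff_block_form {n : ℕ} (A B : Matrix (Fin n) (Fin n) ℂ) :
    Matrix.WGLE A B ↔
    ∃ (p q r : ℕ) (U : Matrix (Fin n) (Fin p ⊕ (Fin q ⊕ Fin r)) ℂ)
      (T : Matrix (Fin p) (Fin p) ℂ) (Sh₁ : Matrix (Fin p) (Fin q) ℂ)
      (Sh₂ : Matrix (Fin p) (Fin r) ℂ) (T₁ : Matrix (Fin q) (Fin q) ℂ)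
      (S₁ : Matrix (Fin q) (Fin r) ℂ)
      (N₁₁ : Matrix (Fin q) (Fin q) ℂ) (N₁₂ : Matrix (Fin q) (Fin r) ℂ)
      (N₂₁ : Matrix (Fin r) (Fin q) ℂ) (N₂₂ : Matrix (Fin r) (Fin r) ℂ)
      (N₂ : Matrix (Fin r) (Fin r) ℂ),
      U * Uᴴ = 1 ∧ Uᴴ * U = 1 ∧ IsUnit T ∧ IsUnit T₁ ∧
      IsNilpotent (Matrix.fromBlocks N₁₁ N₁₂ N₂₁ N₂₂) ∧ IsNilpotent N₂ ∧
      A = U * Matrix.fromBlocks T (Matrix.fromCols Sh₁ Sh₂) 0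
            (Matrix.fromBlocks N₁₁ N₁₂ N₂₁ N₂₂) * Uᴴ ∧
      B = U * Matrix.fromBlocks T
            (Matrix.fromCols (Sh₁ - T⁻¹ * Sh₁ * T₁) (Sh₂ - T⁻¹ * Sh₁ * S₁)) 0
            (Matrix.fromBlocks T₁ S₁ 0 N₂) * Uᴴ := by
  constructor
  · intro h
    obtain ⟨p, m, U, T, S, N, D, F, hU₁, hU₂, hT, hN, hD, hF, hDF, hFD, rfl, rfl⟩ :=
      h.exists_conj_fromBlocks
    obtain ⟨q, r, V, T₁, S₁, N₂, hV₁, hV₂, hT₁, hN₂, rfl, rfl⟩ :=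
      exists_unitary_conj_fromBlocks hD hF hDF hFD
    obtain ⟨hW₁, hW₂⟩ := mul_fromBlocks_one_zero_zero_unitary hU₁ hU₂ hV₁ hV₂ (k := Fin p)
    refine ⟨p, q, r, _, T, (S * V).toCols₁, (S * V).toCols₂, T₁, S₁,
      (Vᴴ * N * V).toBlocks₁₁, (Vᴴ * N * V).toBlocks₁₂, (Vᴴ * N * V).toBlocks₂₁,
      (Vᴴ * N * V).toBlocks₂₂, N₂, hW₁, hW₂, hT, hT₁, ?_, hN₂, ?_, ?_⟩
    · rw [fromBlocks_toBlocks]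
      exact hN.map (unitaryConj V hV₁ hV₂).symm
    · rw [fromCols_toCols, fromBlocks_toBlocks, mul_fromBlocks_one_zero_zero_conj]
      simp only [Matrix.mul_assoc, hV₁, Matrix.mul_one, ← Matrix.mul_assoc V Vᴴ, Matrix.one_mul]
    · rw [← fromCols_sub_mul_fromCols_mul_fromBlocks, fromCols_toCols,
        mul_fromBlocks_one_zero_zero_conj, Matrix.sub_mul, ← Matrix.add_mul, ← Matrix.mul_add,
        fromBlocks_add]
      simp only [Matrix.mul_assoc, hV₁, Matrix.mul_one, add_zero, zero_add]
  · rintro ⟨p, q, r, U, T, Sh₁, Sh₂, T₁, S₁, N₁₁, N₁₂, N₂₁, N₂₂, N₂, hU₁, hU₂, hT, hT₁, hN, hN₂,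
      rfl, rfl⟩
    rw [← fromCols_sub_mul_fromCols_mul_fromBlocks]
    exact wgle_conj_fromBlocks hU₁ hU₂ hT _ hN (hN₂.isCoreEP_zero.fromBlocks hT₁ S₁)
end

section
/- The WG order on n×n complex matrices is transitive: if A ≤WG B and B ≤WG C, then A ≤WG C. (Together with its evident reflexivity, the WG order is a pre-order.) -/
open Matrix

section Aux

variable {n : ℕ}

/-- `A·A·X = A` for a group inverse `X` of `A`. -/
lemma gi_sq_right {A X : Matrix (Fin n) (Fin n) ℂ} (h : Matrix.IsGroupInverse A X) :
    A * A * X = A := by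
  obtain ⟨h1, h2, h3⟩ := h
  calc A * A * X = A * (A * X) := by rw [mul_assoc]
    _ = A * (X * A) := by rw [h3]
    _ = A * X * A := by rw [mul_assoc]
    _ = A := h1

/-- `X·(A·A) = A` for a group inverse `X` of `A`. -/
lemma gi_sq_left {A X : Matrix (Fin n) (Fin n) ℂ} (h : Matrix.IsGroupInverse A X) :
    X * (A * A) = A := by
  obtain ⟨h1, h2, h3⟩ := h
  calc X * (A * A) = X * A * A := by rw [mul_assoc]
    _ = A * X * A := by rw [h3]
    _ = A := h1

/-- From the sharp-order witnessed by a group inverse, get the squared form. -/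
lemma sharp_sq {A B X : Matrix (Fin n) (Fin n) ℂ} (hX : Matrix.IsGroupInverse A X)
    (h1 : A * X = B * X) (h2 : X * A = X * B) :
    A * A = A * B ∧ A * A = B * A := by
  have r : A * A * X = A := gi_sq_right hX
  have l : X * (A * A) = A := gi_sq_left hX
  constructor
  · symm
    calc A * B = A * A * X * B := by rw [r]
      _ = A * A * (X * B) := by rw [mul_assoc]
      _ = A * A * (X * A) := by rw [← h2]
      _ = A * A * X * A := by rw [← mul_assoc]
      _ = A * A := by rw [r]
  · symm
    calc B * A = B * (X * (A * A)) := by rw [l]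
      _ = B * X * (A * A) := by rw [← mul_assoc]
      _ = A * X * (A * A) := by rw [← h1]
      _ = A * (X * (A * A)) := by rw [mul_assoc]
      _ = A * A := by rw [l]

/-- From the squared form, recover the sharp order for any group inverse. -/
lemma sq_sharp {A B X : Matrix (Fin n) (Fin n) ℂ} (hX : Matrix.IsGroupInverse A X)
    (h1 : A * A = A * B) (h2 : A * A = B * A) :
    A * X = B * X ∧ X * A = X * B := by
  have r : A * A * X = A := gi_sq_right hX
  have l : X * (A * A) = A := gi_sq_left hX
  obtain ⟨g1, g2, g3⟩ := hX
  constructor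
  · symm
    calc B * X = B * (X * A * X) := by rw [g2]
      _ = B * (A * X * X) := by rw [← g3]
      _ = B * A * (X * X) := by simp only [mul_assoc]
      _ = A * A * (X * X) := by rw [← h2]
      _ = A * A * X * X := by rw [← mul_assoc]
      _ = A * X := by rw [r]
  · symm
    calc X * B = X * A * X * B := by rw [g2]
      _ = X * (A * X) * B := by rw [mul_assoc X A X]
      _ = X * (X * A) * B := by rw [g3]
      _ = X * X * (A * B) := by simp only [mul_assoc]
      _ = X * X * (A * A) := by rw [← h1]
      _ = X * (X * (A * A)) := by rw [mul_assoc]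
      _ = X * A := by rw [l]

/-- Transitivity at the level of the squared form. -/
lemma sq_trans {A B C X : Matrix (Fin n) (Fin n) ℂ} (hX : Matrix.IsGroupInverse A X)
    (h1 : A * A = A * B) (h2 : A * A = B * A)
    (h3 : B * B = B * C) (h4 : B * B = C * B) :
    A * A = A * C ∧ A * A = C * A := by
  have r : A * A * X = A := gi_sq_right hX
  have l : X * (A * A) = A := gi_sq_left hX
  have e1 : A * A * C = A * (A * A) := by
    calc A * A * C = A * B * C := by rw [h1]
      _ = A * (B * C) := by rw [mul_assoc]
      _ = A * (B * B) := by rw [← h3]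
      _ = A * B * B := by rw [← mul_assoc]
      _ = A * A * B := by rw [← h1]
      _ = A * (A * B) := by rw [mul_assoc]
      _ = A * (A * A) := by rw [← h1]
  have e2 : C * (A * A) = A * A * A := by
    calc C * (A * A) = C * (B * A) := by rw [h2]
      _ = C * B * A := by rw [← mul_assoc]
      _ = B * B * A := by rw [← h4]
      _ = B * (B * A) := by rw [mul_assoc]
      _ = B * (A * A) := by rw [← h2]
      _ = B * A * A := by rw [← mul_assoc]
      _ = A * A * A := by rw [← h2]
  constructor
  · symm
    calc A * C = X * (A * A) * C := by rw [l]
      _ = X * (A * A * C) := by rw [mul_assoc]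
      _ = X * (A * (A * A)) := by rw [e1]
      _ = X * (A * A) * A := by simp only [mul_assoc]
      _ = A * A := by rw [l]
  · symm
    calc C * A = C * (A * A * X) := by rw [r]
      _ = C * (A * A) * X := by rw [← mul_assoc]
      _ = A * A * A * X := by rw [e2]
      _ = A * (A * A * X) := by simp only [mul_assoc]
      _ = A * A := by rw [r]

/-- `Aᵐ·A₁·Xᵐ = A₁`: the core part is in the range of every power of `A`. -/
lemma pow_fix (A A₁ A₂ X : Matrix (Fin n) (Fin n) ℂ)
    (hsum : A = A₁ + A₂) (hz : A₂ * A₁ = 0) (hX : Matrix.IsGroupInverse A₁ X) :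
    ∀ m : ℕ, A ^ m * A₁ * X ^ m = A₁ := by
  intro m
  induction m with
  | zero => simp
  | succ m ih =>
    have key : A * A₁ * X = A₁ := by
      have h' : A * A₁ = A₁ * A₁ := by rw [hsum, add_mul, hz, add_zero]
      rw [h']
      exact gi_sq_right hX
    calc A ^ (m + 1) * A₁ * X ^ (m + 1)
        = A ^ m * (A * A₁ * X) * X ^ m := by
          rw [pow_succ A m, pow_succ' X m]; simp only [mul_assoc]
      _ = A ^ m * A₁ * X ^ m := by rw [key]
      _ = A₁ := ih

/-- Every positive power of `A` factors through the core part on the left,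
up to the corresponding power of the nilpotent part. -/
lemma pow_factor (A A₁ A₂ : Matrix (Fin n) (Fin n) ℂ)
    (hsum : A = A₁ + A₂) (hz : A₂ * A₁ = 0) :
    ∀ m : ℕ, ∃ S, A ^ (m + 1) = A₁ * S + A₂ ^ (m + 1) := by
  intro m
  induction m with
  | zero => exact ⟨1, by simpa using hsum⟩
  | succ m ih =>
    obtain ⟨S, hS⟩ := ih
    have hz' : A₂ ^ (m + 1) * A₁ = 0 := by
      rw [pow_succ, mul_assoc, hz, mul_zero]
    refine ⟨S * A₁ + S * A₂, ?_⟩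
    calc A ^ (m + 1 + 1) = A ^ (m + 1) * A := pow_succ A (m + 1)
      _ = (A₁ * S + A₂ ^ (m + 1)) * (A₁ + A₂) := by rw [hS, ← hsum]
      _ = A₁ * (S * A₁ + S * A₂) + (A₂ ^ (m + 1) * A₁ + A₂ ^ (m + 1) * A₂) := by
          noncomm_ring
      _ = A₁ * (S * A₁ + S * A₂) + A₂ ^ (m + 1 + 1) := by
          rw [hz', zero_add, ← pow_succ]

/-- The core part of a core-EP decomposition is unique. -/
lemma coreEP_core_unique {A A₁ A₂ B₁ B₂ : Matrix (Fin n) (Fin n) ℂ}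
    (hA : Matrix.IsCoreEPDecomposition A A₁ A₂)
    (hB : Matrix.IsCoreEPDecomposition A B₁ B₂) : A₁ = B₁ := by
  obtain ⟨hsA, ⟨X, hX⟩, ⟨kA, hkA⟩, hHA, hzA⟩ := hA
  obtain ⟨hsB, ⟨Y, hY⟩, ⟨kB, hkB⟩, hHB, hzB⟩ := hB
  have hA2 : A₂ ^ (kA + kB + 1) = 0 := by
    have h : kA + kB + 1 = kA + (kB + 1) := by omega
    rw [h, pow_add, hkA, zero_mul]
  have hB2 : B₂ ^ (kA + kB + 1) = 0 := by
    have h : kA + kB + 1 = kB + (kA + 1) := by omega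
    rw [h, pow_add, hkB, zero_mul]
  obtain ⟨S, hS⟩ := pow_factor A A₁ A₂ hsA hzA (kA + kB)
  rw [hA2, add_zero] at hS
  obtain ⟨T, hT⟩ := pow_factor A B₁ B₂ hsB hzB (kA + kB)
  rw [hB2, add_zero] at hT
  have hfixA : A ^ (kA + kB + 1) * A₁ * X ^ (kA + kB + 1) = A₁ :=
    pow_fix A A₁ A₂ X hsA hzA hX (kA + kB + 1)
  have hfixB : A ^ (kA + kB + 1) * B₁ * Y ^ (kA + kB + 1) = B₁ :=
    pow_fix A B₁ B₂ Y hsB hzB hY (kA + kB + 1)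
  -- range inclusions, witnessed explicitly
  have hBfac : B₁ = A₁ * (S * (B₁ * Y ^ (kA + kB + 1))) := by
    calc B₁ = A ^ (kA + kB + 1) * B₁ * Y ^ (kA + kB + 1) := hfixB.symm
      _ = A₁ * S * B₁ * Y ^ (kA + kB + 1) := by rw [hS]
      _ = A₁ * (S * (B₁ * Y ^ (kA + kB + 1))) := by simp only [mul_assoc]
  have hAfac : A₁ = B₁ * (T * (A₁ * X ^ (kA + kB + 1))) := by
    calc A₁ = A ^ (kA + kB + 1) * A₁ * X ^ (kA + kB + 1) := hfixA.symm
      _ = B₁ * T * A₁ * X ^ (kA + kB + 1) := by rw [hT]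
      _ = B₁ * (T * (A₁ * X ^ (kA + kB + 1))) := by simp only [mul_assoc]
  -- orthogonality transfers
  have h1 : A₁ᴴ * B₂ = 0 := by
    rw [hAfac, conjTranspose_mul, mul_assoc, hHB, mul_zero]
  have h2 : B₁ᴴ * A₂ = 0 := by
    rw [hBfac, conjTranspose_mul, mul_assoc, hHA, mul_zero]
  have hdiff : A₁ - B₁ = B₂ - A₂ := by
    have e1 : A₁ = A - A₂ := by rw [hsA]; abel
    have e2 : B₁ = A - B₂ := by rw [hsB]; abel
    rw [e1, e2]; abel
  have hA1 : A₁ᴴ * (A₁ - B₁) = 0 := by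
    rw [hdiff, mul_sub, h1, hHA, sub_zero]
  have hB1 : B₁ᴴ * (A₁ - B₁) = 0 := by
    rw [hdiff, mul_sub, hHB, h2, sub_zero]
  have key : (A₁ - B₁)ᴴ * (A₁ - B₁) = 0 := by
    rw [conjTranspose_sub, sub_mul, hA1, hB1, sub_zero]
  open ComplexOrder in
  exact sub_eq_zero.mp (Matrix.conjTranspose_mul_self_eq_zero.mp key)

end Aux

/-- The WG order is transitive (hence, with reflexivity, a pre-order). -/
theorem wgle_trans {n : ℕ} (A B C : Matrix (Fin n) (Fin n) ℂ)
    (hAB : Matrix.WGLE A B) (hBC : Matrix.WGLE B C) : Matrix.WGLE A C := by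
  obtain ⟨A₁, A₂, B₁, B₂, X, hA, hB, hX, h1, h2⟩ := hAB
  obtain ⟨B₁', B₂', C₁, C₂, Y, hB', hC, hY, h3, h4⟩ := hBC
  have hBB : B₁ = B₁' := coreEP_core_unique hB hB'
  subst hBB
  obtain ⟨hsqAB1, hsqAB2⟩ := sharp_sq hX h1 h2
  obtain ⟨hsqBC1, hsqBC2⟩ := sharp_sq hY h3 h4
  obtain ⟨hsqAC1, hsqAC2⟩ := sq_trans hX hsqAB1 hsqAB2 hsqBC1 hsqBC2
  obtain ⟨hc1, hc2⟩ := sq_sharp hX hsqAC1 hsqAC2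
  exact ⟨A₁, A₂, C₁, C₂, X, hA, hC, hX, hc1, hc2⟩
end

section
/- The C-E order on n×n complex matrices is antisymmetric: if A ≤CE B and B ≤CE A, then A = B. (Together with reflexivity and transitivity, the C-E order is a partial order.) -/
open Matrix

/-- The C-E order: sharp order on the core parts and minus order on the nilpotent
parts of the core-EP decompositions. -/
def Matrix.CELE {n : ℕ} (A B : Matrix (Fin n) (Fin n) ℂ) : Prop :=
  ∃ A₁ A₂ B₁ B₂ X : Matrix (Fin n) (Fin n) ℂ,
    Matrix.IsCoreEPDecomposition A A₁ A₂ ∧ Matrix.IsCoreEPDecomposition B B₁ B₂ ∧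
    Matrix.IsGroupInverse A₁ X ∧ A₁ * X = B₁ * X ∧ X * A₁ = X * B₁ ∧
    (B₂ - A₂).rank = B₂.rank - A₂.rank

/-- A nilpotent `n × n` matrix satisfies `M ^ n = 0`. -/
lemma nilp_pow_card {n : ℕ} {M : Matrix (Fin n) (Fin n) ℂ} (h : IsNilpotent M) : M ^ n = 0 := by
  have hφ : IsNilpotent (Matrix.toLinAlgEquiv' M) := h.map _
  have hc := hφ.charpoly_eq_X_pow_finrank
  have hfr : Module.finrank ℂ (Fin n → ℂ) = n := by simp
  have h1 : (Matrix.toLinAlgEquiv' M) ^ n = 0 := by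
    have := LinearMap.aeval_self_charpoly (Matrix.toLinAlgEquiv' M)
    rw [hc, hfr, map_pow, Polynomial.aeval_X] at this
    exact this
  have h0 : Matrix.toLinAlgEquiv' (M ^ n) = Matrix.toLinAlgEquiv' (0 : Matrix (Fin n) (Fin n) ℂ) := by
    rw [map_pow, map_zero]; exact h1
  exact (Matrix.toLinAlgEquiv' (R := ℂ) (n := Fin n)).injective h0

/-- Negation does not change the rank. -/
lemma rank_neg' {n : ℕ} (M : Matrix (Fin n) (Fin n) ℂ) : (-M).rank = M.rank := by
  have h : (-M).mulVecLin = -(M.mulVecLin) := by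
    ext v i; simp [Matrix.mulVecLin_apply, Matrix.neg_mulVec]
  rw [Matrix.rank, Matrix.rank, h, LinearMap.range_neg]

/-- A matrix of rank zero is zero. -/
lemma rank_zero_imp {n : ℕ} {M : Matrix (Fin n) (Fin n) ℂ} (h : M.rank = 0) : M = 0 := by
  rw [Matrix.rank, Submodule.finrank_eq_zero, LinearMap.range_eq_bot] at h
  ext i j
  have := congrFun (congrFun (congrArg DFunLike.coe h) (Pi.single j 1)) i
  simpa [Matrix.mulVecLin_apply, Matrix.mulVec_single] using this

/-- `A₂ᴴ * A ^ n = 0` for a core-EP decomposition: the columns of `A ^ n` are orthogonal to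
those of the nilpotent part. -/
lemma nilpart_hit {n : ℕ} {A A₁ A₂ : Matrix (Fin n) (Fin n) ℂ}
    (hsum : A = A₁ + A₂) (h21 : A₂ * A₁ = 0) (hperp : A₂ᴴ * A₁ = 0)
    (hpow : A₂ ^ n = 0) : A₂ᴴ * A ^ n = 0 := by
  have key : ∀ m : ℕ, A₂ᴴ * A ^ m = A₂ᴴ * A₂ ^ m := by
    intro m
    induction m with
    | zero => simp
    | succ k ih =>
      have hz : A₂ᴴ * A₂ ^ k * A₁ = 0 := by
        cases k with
        | zero => simpa using hperp
        | succ j =>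
          rw [pow_succ, mul_assoc A₂ᴴ, mul_assoc (A₂ ^ j), h21, mul_zero, mul_zero]
      rw [pow_succ, ← mul_assoc, ih, hsum, mul_add, hz, zero_add, pow_succ, mul_assoc]
  rw [key n, hpow, mul_zero]

/-- The core part can be recovered as `A ^ n * (A₁ * X ^ n)`. -/
lemma corepart_eq {n : ℕ} {A A₁ A₂ X : Matrix (Fin n) (Fin n) ℂ}
    (hsum : A = A₁ + A₂) (h21 : A₂ * A₁ = 0) (hg : Matrix.IsGroupInverse A₁ X) :
    A ^ n * (A₁ * X ^ n) = A₁ := by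
  obtain ⟨hg1, hg2, hg3⟩ := hg
  have hAA₁ : A * A₁ = A₁ * A₁ := by rw [hsum, add_mul, h21, add_zero]
  have h1 : ∀ m : ℕ, A ^ m * A₁ = A₁ ^ (m + 1) := by
    intro m
    induction m with
    | zero => simp
    | succ k ih =>
      rw [pow_succ, mul_assoc, hAA₁, ← mul_assoc, ih, ← pow_succ]
  have h2 : ∀ m : ℕ, A₁ ^ (m + 1) * X ^ m = A₁ := by
    intro m
    induction m with
    | zero => simp
    | succ k ih =>
      have h3 : A₁ ^ (k + 1 + 1) * X ^ (k + 1) = A₁ * (A₁ ^ (k + 1) * X ^ k) * X := by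
        rw [pow_succ' A₁ (k + 1), pow_succ X k]
        simp only [mul_assoc]
      rw [h3, ih, mul_assoc, hg3, ← mul_assoc, hg1]
  rw [← mul_assoc, h1 n, h2 n]

open scoped ComplexOrder in
/-- Uniqueness of the core-EP decomposition. -/
lemma coreEP_unique {n : ℕ} {A A₁ A₂ C₁ C₂ : Matrix (Fin n) (Fin n) ℂ}
    (hA : Matrix.IsCoreEPDecomposition A A₁ A₂)
    (hC : Matrix.IsCoreEPDecomposition A C₁ C₂) : A₁ = C₁ ∧ A₂ = C₂ := by
  obtain ⟨hs, ⟨X, hX⟩, hnil, hperp, h21⟩ := hA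
  obtain ⟨hs', ⟨Y, hY⟩, hnil', hperp', h21'⟩ := hC
  have hperpT : A₂ᴴ * A₁ = 0 := by
    have := congrArg Matrix.conjTranspose hperp
    simpa [Matrix.conjTranspose_mul] using this
  have hperpT' : C₂ᴴ * C₁ = 0 := by
    have := congrArg Matrix.conjTranspose hperp'
    simpa [Matrix.conjTranspose_mul] using this
  have hA2 : A₂ᴴ * A ^ n = 0 := nilpart_hit hs h21 hperpT (nilp_pow_card hnil)
  have hC2 : C₂ᴴ * A ^ n = 0 := nilpart_hit hs' h21' hperpT' (nilp_pow_card hnil')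
  have hA1 : A ^ n * (A₁ * X ^ n) = A₁ := corepart_eq hs h21 hX
  have hC1 : A ^ n * (C₁ * Y ^ n) = C₁ := corepart_eq hs' h21' hY
  have e1 : A₁ᴴ * C₂ = 0 := by
    have h0 : (A ^ n)ᴴ * C₂ = 0 := by
      have := congrArg Matrix.conjTranspose hC2
      simpa [Matrix.conjTranspose_mul] using this
    rw [← hA1, Matrix.conjTranspose_mul, mul_assoc, h0, mul_zero]
  have e2 : C₁ᴴ * A₂ = 0 := by
    have h0 : (A ^ n)ᴴ * A₂ = 0 := by
      have := congrArg Matrix.conjTranspose hA2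
      simpa [Matrix.conjTranspose_mul] using this
    rw [← hC1, Matrix.conjTranspose_mul, mul_assoc, h0, mul_zero]
  have hD : A₁ - C₁ = C₂ - A₂ := by
    have h0 : A₁ + A₂ = C₁ + C₂ := by rw [← hs, ← hs']
    linear_combination (norm := abel) h0
  have hDD : (A₁ - C₁)ᴴ * (A₁ - C₁) = 0 := by
    nth_rewrite 2 [hD]
    rw [Matrix.conjTranspose_sub, sub_mul, mul_sub, mul_sub, e1, hperp, e2, hperp']
    simp
  have h0 : A₁ - C₁ = 0 := Matrix.conjTranspose_mul_self_eq_zero.mp hDD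
  have hA1C1 : A₁ = C₁ := by linear_combination (norm := abel) h0
  refine ⟨hA1C1, ?_⟩
  have h4 : A₁ + A₂ = C₁ + C₂ := by rw [← hs, ← hs']
  rw [hA1C1] at h4
  exact add_left_cancel h4

/-- The C-E order is antisymmetric (hence, with reflexivity and transitivity,
a partial order). -/
theorem cele_antisymm {n : ℕ} (A B : Matrix (Fin n) (Fin n) ℂ)
    (hAB : Matrix.CELE A B) (hBA : Matrix.CELE B A) : A = B := by
  obtain ⟨A₁, A₂, B₁, B₂, X, dA, dB, hX, h1, h2, hr1⟩ := hAB
  obtain ⟨B₁', B₂', A₁', A₂', Y, dB', dA', hY, k1, k2, hr2⟩ := hBA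
  obtain ⟨eB1, eB2⟩ := coreEP_unique dB' dB
  obtain ⟨eA1, eA2⟩ := coreEP_unique dA' dA
  subst eB1; subst eB2; subst eA1; subst eA2
  -- nilpotent parts agree
  have hneg : (A₂' - B₂').rank = (B₂' - A₂').rank := by
    rw [← neg_sub B₂' A₂', rank_neg']
  rw [hneg] at hr2
  have hrz : (B₂' - A₂').rank = 0 := by omega
  have hnilEq : B₂' = A₂' := by
    have := rank_zero_imp hrz
    linear_combination (norm := abel) this
  -- core parts agree
  obtain ⟨hx1, hx2, hx3⟩ := hX
  obtain ⟨hy1, hy2, hy3⟩ := hY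
  have hB1 : B₁' = A₁' * (Y * A₁') := by
    calc B₁' = B₁' * Y * B₁' := hy1.symm
    _ = A₁' * Y * B₁' := by rw [k1]
    _ = A₁' * (Y * A₁') := by rw [mul_assoc, k2]
  have hcore : A₁' = B₁' := by
    calc A₁' = A₁' * X * A₁' := hx1.symm
    _ = B₁' * X * A₁' := by rw [h1]
    _ = B₁' * X * B₁' := by rw [mul_assoc, mul_assoc, h2]
    _ = (A₁' * (Y * A₁')) * X * (A₁' * (Y * A₁')) := by rw [hB1]
    _ = A₁' * (Y * (A₁' * X * A₁')) * (Y * A₁') := by simp only [mul_assoc]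
    _ = A₁' * (Y * A₁') * (Y * A₁') := by rw [hx1]
    _ = B₁' * (Y * A₁') := by rw [← hB1]
    _ = B₁' * (Y * B₁') := by rw [← k2]
    _ = B₁' := by rw [← mul_assoc, hy1]
  rw [dA.1, dB.1, hcore, hnilEq]
end

section
/- Let M = fromBlocks N₁₁ N₁₂ N₂₁ N₂₂ be a 2×2 block complex matrix and let N₂ be a matrix of the same size as N₂₂. If rank(fromBlocks 0 0 0 N₂ − M) = rank(N₂) − rank(M) (i.e., M is below fromBlocks 0 0 0 N₂ in the minus order), then N₁₁ = 0, N₁₂ = 0, N₂₁ = 0, and rank(N₂ − N₂₂) = rank(N₂) − rank(N₂₂) (i.e., N₂₂ ≤⁻ N₂). -/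
/-!
If `A ≤⁻ B` then `rank A + rank (B - A) = rank B` (the truncated subtraction in the hypothesis
is harmless because `rank A ≤ rank B + rank (B - A)`). Since the column space of `B` lies in the
sum of those of `A` and `B - A`, comparing dimensions forces the column space of `A` into that
of `B`, and likewise for row spaces by transposing. For `B = fromBlocks 0 0 0 N₂` every row and
column indexed by the first block vanishes, so the same holds for `A`, and what remains is the
minus order between the lower right blocks.
-/

open Matrix

namespace Matrix

variable {K l m n o : Type*} [Field K] [Fintype n]

theorem rank_add_le (A B : Matrix m n K) : (A + B).rank ≤ A.rank + B.rank := by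
  rw [rank, mulVecLin_add]
  exact (Submodule.finrank_mono (LinearMap.range_add_le _ _)).trans
    (Submodule.finrank_add_le_finrank_add_finrank _ _)

theorem rank_neg (A : Matrix m n K) : (-A).rank = A.rank := by
  have : (-A).mulVecLin = -A.mulVecLin := LinearMap.ext fun v => neg_mulVec v A
  rw [rank, rank, this, LinearMap.range_neg]

theorem rank_sub_le (A B : Matrix m n K) : (A - B).rank ≤ A.rank + B.rank := by
  simpa only [sub_eq_add_neg, rank_neg] using rank_add_le A (-B)

theorem range_mulVecLin_le_of_rank_add_eq {A B : Matrix m n K}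
    (h : A.rank + B.rank = (A + B).rank) :
    LinearMap.range A.mulVecLin ≤ LinearMap.range (A + B).mulVecLin := by
  have hle := LinearMap.range_add_le A.mulVecLin B.mulVecLin
  rw [← mulVecLin_add] at hle
  have hfin : Module.finrank K ↥(LinearMap.range A.mulVecLin ⊔ LinearMap.range B.mulVecLin) ≤
      Module.finrank K (LinearMap.range (A + B).mulVecLin) :=
    (Submodule.finrank_add_le_finrank_add_finrank _ _).trans h.le
  rw [Submodule.eq_of_le_of_finrank_le hle hfin]
  exact le_sup_left

theorem row_eq_zero_of_range_mulVecLin_le {A B : Matrix m n K}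
    (h : LinearMap.range A.mulVecLin ≤ LinearMap.range B.mulVecLin) {i : m} (hi : B i = 0) :
    A i = 0 := by
  classical
  ext j
  obtain ⟨w, hw⟩ := h (LinearMap.mem_range_self A.mulVecLin (Pi.single j 1))
  have := congrFun hw i
  rw [mulVecLin_apply, mulVecLin_apply, mulVec_single_one, col_apply, mulVec, hi,
    zero_dotProduct] at this
  exact this.symm

theorem rank_fromBlocks_zero_zero_zero [Fintype l] [Fintype m] [Fintype o] (A : Matrix m n K) :
    (fromBlocks (0 : Matrix l o K) 0 0 A).rank = A.rank := by
  classical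
  have hembed : fromBlocks (0 : Matrix l o K) 0 0 A =
      fromRows (0 : Matrix l m K) 1 * A * fromCols (0 : Matrix n o K) (1 : Matrix n n K) := by
    rw [fromRows_mul, Matrix.zero_mul, Matrix.one_mul, fromRows_mul_fromCols]
    simp
  have hproject : A = fromCols (0 : Matrix m l K) (1 : Matrix m m K) *
      fromBlocks (0 : Matrix l o K) 0 0 A * fromRows (0 : Matrix o n K) (1 : Matrix n n K) := by
    simp [fromCols_mul_fromBlocks, fromCols_mul_fromRows]
  apply le_antisymm
  · rw [hembed]
    exact (rank_mul_le_left _ _).trans (rank_mul_le_right _ _)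
  · conv_lhs => rw [hproject]
    exact (rank_mul_le_left _ _).trans (rank_mul_le_right _ _)

def MinusLE (A B : Matrix m n K) : Prop :=
  (B - A).rank = B.rank - A.rank

local infix:50 " ≤⁻ " => MinusLE

namespace MinusLE

variable {A B : Matrix m n K}

theorem rank_add_rank_sub (h : A ≤⁻ B) : A.rank + (B - A).rank = B.rank := by
  have hA : A.rank ≤ B.rank + (B - A).rank := by
    simpa only [sub_sub_cancel] using rank_sub_le B (B - A)
  unfold MinusLE at h
  omega

theorem range_mulVecLin_le (h : A ≤⁻ B) :
    LinearMap.range A.mulVecLin ≤ LinearMap.range B.mulVecLin := by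
  have hrank : A.rank + (B - A).rank = (A + (B - A)).rank := by
    rw [add_sub_cancel, h.rank_add_rank_sub]
  simpa only [add_sub_cancel] using range_mulVecLin_le_of_rank_add_eq hrank

theorem transpose [Fintype m] (h : A ≤⁻ B) : Aᵀ ≤⁻ Bᵀ := by
  simpa only [MinusLE, ← transpose_sub, rank_transpose] using h

end MinusLE

theorem minusLE_fromBlocks_zero_zero_zero_iff [Fintype l] [Fintype m] [Fintype o]
    {A B : Matrix m n K} :
    fromBlocks (0 : Matrix l o K) 0 0 A ≤⁻ fromBlocks 0 0 0 B ↔ A ≤⁻ B := by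
  simp only [MinusLE, sub_eq_add_neg, fromBlocks_neg, fromBlocks_add, neg_zero, add_zero,
    rank_fromBlocks_zero_zero_zero]

end Matrix

theorem minus_order_block_diag_general {p q : Type*}
    [Fintype p] [Fintype q]
    (N₁₁ : Matrix p p ℂ) (N₁₂ : Matrix p q ℂ) (N₂₁ : Matrix q p ℂ) (N₂₂ N₂ : Matrix q q ℂ)
    (h : (Matrix.fromBlocks 0 0 0 N₂ - Matrix.fromBlocks N₁₁ N₁₂ N₂₁ N₂₂).rank
        = N₂.rank - (Matrix.fromBlocks N₁₁ N₁₂ N₂₁ N₂₂).rank) :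
    N₁₁ = 0 ∧ N₁₂ = 0 ∧ N₂₁ = 0 ∧ (N₂ - N₂₂).rank = N₂.rank - N₂₂.rank := by
  have hM : MinusLE (fromBlocks N₁₁ N₁₂ N₂₁ N₂₂) (fromBlocks 0 0 0 N₂) := by
    rwa [MinusLE, rank_fromBlocks_zero_zero_zero]
  have htop (X : Matrix q q ℂ) (i : p) : fromBlocks (0 : Matrix p p ℂ) 0 0 X (.inl i) = 0 := by
    ext (j | j) <;> rfl
  have hrows (i : p) : fromBlocks N₁₁ N₁₂ N₂₁ N₂₂ (.inl i) = 0 :=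
    row_eq_zero_of_range_mulVecLin_le hM.range_mulVecLin_le (htop N₂ i)
  have hcols (i : p) : (fromBlocks N₁₁ N₁₂ N₂₁ N₂₂)ᵀ (.inl i) = 0 := by
    refine row_eq_zero_of_range_mulVecLin_le hM.transpose.range_mulVecLin_le ?_
    simpa only [fromBlocks_transpose, transpose_zero] using htop N₂ᵀ i
  have h₁₁ : N₁₁ = 0 := ext fun i j => congrFun (hrows i) (.inl j)
  have h₁₂ : N₁₂ = 0 := ext fun i j => congrFun (hrows i) (.inr j)
  have h₂₁ : N₂₁ = 0 := ext fun i j => congrFun (hcols j) (.inr i)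
  subst h₁₁ h₁₂ h₂₁
  exact ⟨rfl, rfl, rfl, minusLE_fromBlocks_zero_zero_zero_iff.mp hM⟩

/-- If the block matrix `M = fromBlocks N₁₁ N₁₂ N₂₁ N₂₂` is below `fromBlocks 0 0 0 N₂`
in the minus order (`rank(fromBlocks 0 0 0 N₂ − M) = rank(N₂) − rank(M)`), then
`N₁₁ = 0`, `N₁₂ = 0`, `N₂₁ = 0` and `N₂₂ ≤⁻ N₂`. -/
theorem minus_order_block_diag {p q : Type*}
    [Fintype p] [Fintype q] [DecidableEq p] [DecidableEq q]
    (N₁₁ : Matrix p p ℂ) (N₁₂ : Matrix p q ℂ) (N₂₁ : Matrix q p ℂ) (N₂₂ N₂ : Matrix q q ℂ)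
    (h : (Matrix.fromBlocks 0 0 0 N₂ - Matrix.fromBlocks N₁₁ N₁₂ N₂₁ N₂₂).rank
        = N₂.rank - (Matrix.fromBlocks N₁₁ N₁₂ N₂₁ N₂₂).rank) :
    N₁₁ = 0 ∧ N₁₂ = 0 ∧ N₂₁ = 0 ∧ (N₂ - N₂₂).rank = N₂.rank - N₂₂.rank :=
  minus_order_block_diag_general N₁₁ N₁₂ N₂₁ N₂₂ N₂ h
end

section
/- Let A, B be n×n complex matrices with A ≤CE B. Then A ≤⁻ B, i.e., rank(B − A) = rank(B) − rank(A). -/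
open Matrix

namespace CEaux

variable {n : ℕ}

lemma rank_def (M : Matrix (Fin n) (Fin n) ℂ) :
    M.rank = Module.finrank ℂ (LinearMap.range M.mulVecLin) := rfl

lemma rank_add_le' (S T : Matrix (Fin n) (Fin n) ℂ) :
    (S + T).rank ≤ S.rank + T.rank := by
  have hsub : LinearMap.range (S + T).mulVecLin ≤
      LinearMap.range S.mulVecLin ⊔ LinearMap.range T.mulVecLin := by
    rw [Matrix.mulVecLin_add]
    rintro x ⟨v, rfl⟩
    exact Submodule.mem_sup.2 ⟨_, ⟨v, rfl⟩, _, ⟨v, rfl⟩, rfl⟩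
  calc (S + T).rank ≤ Module.finrank ℂ
        (LinearMap.range S.mulVecLin ⊔ LinearMap.range T.mulVecLin : Submodule ℂ (Fin n → ℂ)) :=
        Submodule.finrank_mono hsub
    _ ≤ S.rank + T.rank := Submodule.finrank_add_le_finrank_add_finrank _ _

lemma eq_zero_of_rank_eq_zero {M : Matrix (Fin n) (Fin n) ℂ} (h : M.rank = 0) : M = 0 := by
  have hr : LinearMap.range M.mulVecLin = ⊥ := Submodule.finrank_eq_zero.mp h
  have hv : ∀ v, M *ᵥ v = 0 := by
    intro v
    have : M.mulVecLin v ∈ (⊥ : Submodule ℂ (Fin n → ℂ)) := hr ▸ LinearMap.mem_range_self _ v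
    simpa [Matrix.mulVecLin_apply] using this
  ext i j
  have := congrFun (hv (Pi.single j 1)) i
  simpa [Matrix.mulVec_single] using this

lemma rank_add_of_ker (S T : Matrix (Fin n) (Fin n) ℂ)
    (h1 : ∀ v, S *ᵥ v + T *ᵥ v = 0 → S *ᵥ v = 0)
    (h2 : LinearMap.ker S.mulVecLin ⊔ LinearMap.ker T.mulVecLin = ⊤) :
    (S + T).rank = S.rank + T.rank := by
  have hker : LinearMap.ker (S + T).mulVecLin
      = LinearMap.ker S.mulVecLin ⊓ LinearMap.ker T.mulVecLin := by
    apply le_antisymm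
    · intro v hv
      have hv' : S *ᵥ v + T *ᵥ v = 0 := by
        simpa [Matrix.mulVecLin_apply, Matrix.add_mulVec] using hv
      have hS := h1 v hv'
      have hT : T *ᵥ v = 0 := by rw [hS, zero_add] at hv'; exact hv'
      exact ⟨by simpa [LinearMap.mem_ker, Matrix.mulVecLin_apply] using hS,
        by simpa [LinearMap.mem_ker, Matrix.mulVecLin_apply] using hT⟩
    · rintro v ⟨hS, hT⟩
      simp only [SetLike.mem_coe, LinearMap.mem_ker, Matrix.mulVecLin_apply] at hS hT ⊢
      rw [Matrix.add_mulVec, hS, hT, add_zero]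
  have r1 := LinearMap.finrank_range_add_finrank_ker S.mulVecLin
  have r2 := LinearMap.finrank_range_add_finrank_ker T.mulVecLin
  have r3 := LinearMap.finrank_range_add_finrank_ker (S + T).mulVecLin
  rw [hker] at r3
  have r4 := Submodule.finrank_sup_add_finrank_inf_eq
    (LinearMap.ker S.mulVecLin) (LinearMap.ker T.mulVecLin)
  rw [h2] at r4
  have hfin : Module.finrank ℂ (Fin n → ℂ) = n := Module.finrank_fin_fun ℂ
  have htop : Module.finrank ℂ (⊤ : Submodule ℂ (Fin n → ℂ)) = n := by
    rw [finrank_top, hfin]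
  rw [hfin] at r1 r2 r3
  rw [htop] at r4
  rw [rank_def, rank_def, rank_def]
  omega

lemma ker_sup_top (S T P : Matrix (Fin n) (Fin n) ℂ)
    (hS : S * P = S) (hT : T * P = 0) :
    LinearMap.ker S.mulVecLin ⊔ LinearMap.ker T.mulVecLin = ⊤ := by
  rw [Submodule.eq_top_iff']
  intro v
  refine Submodule.mem_sup.2 ⟨v - P *ᵥ v, ?_, P *ᵥ v, ?_, by abel⟩
  · simp only [LinearMap.mem_ker, Matrix.mulVecLin_apply]
    rw [Matrix.mulVec_sub, Matrix.mulVec_mulVec, hS, sub_self]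
  · simp only [LinearMap.mem_ker, Matrix.mulVecLin_apply]
    rw [Matrix.mulVec_mulVec, hT, Matrix.zero_mulVec]

lemma mulVec_eq_zero_of_orth {M N : Matrix (Fin n) (Fin n) ℂ} (h : Mᴴ * N = 0)
    {v : Fin n → ℂ} (hv : M *ᵥ v + N *ᵥ v = 0) : M *ᵥ v = 0 := by
  have h0 : star (M *ᵥ v) ⬝ᵥ (N *ᵥ v) = 0 := by
    rw [Matrix.star_mulVec, Matrix.dotProduct_mulVec, Matrix.vecMul_vecMul, h,
      Matrix.vecMul_zero, zero_dotProduct]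
  have hm : N *ᵥ v = -(M *ᵥ v) := eq_neg_of_add_eq_zero_right hv
  have hz : star (M *ᵥ v) ⬝ᵥ (M *ᵥ v) = 0 := by
    have h1 := h0
    rw [hm, dotProduct_neg, neg_eq_zero] at h1
    exact h1
  open scoped ComplexOrder in
  exact dotProduct_star_self_eq_zero.mp hz

end CEaux

/-- The C-E order implies the minus order: `A ≤CE B → rank(B − A) = rank(B) − rank(A)`. -/
theorem cele_implies_minus {n : ℕ} (A B : Matrix (Fin n) (Fin n) ℂ)
    (h : Matrix.CELE A B) : (B - A).rank = B.rank - A.rank := by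
  obtain ⟨A₁, A₂, B₁, B₂, X, hA, hB, hX, hAXB, hXAB, hr⟩ := h
  obtain ⟨hAeq, -, -, hAorth, hA21⟩ := hA
  obtain ⟨hBeq, ⟨Y, hY⟩, -, hBorth, hB21⟩ := hB
  obtain ⟨hX1, hX2, hX3⟩ := hX
  obtain ⟨hY1, hY2, hY3⟩ := hY
  -- A₂ * X = 0 and B₂ * Y = 0
  have hXX : A₁ * X * X = X := by rw [hX3]; exact hX2
  have hA2X : A₂ * X = 0 := by
    calc A₂ * X = A₂ * (A₁ * X * X) := by rw [hXX]
      _ = A₂ * A₁ * X * X := by rw [← mul_assoc, ← mul_assoc]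
      _ = 0 := by rw [hA21, Matrix.zero_mul, Matrix.zero_mul]
  have hYY : B₁ * Y * Y = Y := by rw [hY3]; exact hY2
  have hB2Y : B₂ * Y = 0 := by
    calc B₂ * Y = B₂ * (B₁ * Y * Y) := by rw [hYY]
      _ = B₂ * B₁ * Y * Y := by rw [← mul_assoc, ← mul_assoc]
      _ = 0 := by rw [hB21, Matrix.zero_mul, Matrix.zero_mul]
  -- rank A = rank A₁ + rank A₂
  have eA : A.rank = A₁.rank + A₂.rank := by
    rw [hAeq]
    refine CEaux.rank_add_of_ker A₁ A₂ (fun v hv => CEaux.mulVec_eq_zero_of_orth hAorth hv)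
      (CEaux.ker_sup_top A₁ A₂ (X * A₁) ?_ ?_)
    · rw [← mul_assoc, hX1]
    · rw [← mul_assoc, hA2X, Matrix.zero_mul]
  -- rank B = rank B₁ + rank B₂
  have eB : B.rank = B₁.rank + B₂.rank := by
    rw [hBeq]
    refine CEaux.rank_add_of_ker B₁ B₂ (fun v hv => CEaux.mulVec_eq_zero_of_orth hBorth hv)
      (CEaux.ker_sup_top B₁ B₂ (Y * B₁) ?_ ?_)
    · rw [← mul_assoc, hY1]
    · rw [← mul_assoc, hB2Y, Matrix.zero_mul]
  -- rank B₁ = rank A₁ + rank (B₁ - A₁)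
  have hA1XB1 : A₁ * X * B₁ = A₁ := by
    rw [mul_assoc, ← hXAB, ← mul_assoc, hX1]
  have eB1 : B₁.rank = A₁.rank + (B₁ - A₁).rank := by
    have key : (A₁ + (B₁ - A₁)).rank = A₁.rank + (B₁ - A₁).rank := by
      refine CEaux.rank_add_of_ker A₁ (B₁ - A₁) ?_
        (CEaux.ker_sup_top A₁ (B₁ - A₁) (X * A₁) ?_ ?_)
      · intro v hv
        have hBv : B₁ *ᵥ v = 0 := by
          rw [Matrix.sub_mulVec] at hv
          calc B₁ *ᵥ v = A₁ *ᵥ v + (B₁ *ᵥ v - A₁ *ᵥ v) := by abel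
            _ = 0 := hv
        rw [← hA1XB1, ← Matrix.mulVec_mulVec, hBv, Matrix.mulVec_zero]
      · rw [← mul_assoc, hX1]
      · rw [Matrix.sub_mul, ← mul_assoc, ← mul_assoc, ← hAXB, sub_self]
    rwa [show A₁ + (B₁ - A₁) = B₁ from by abel] at key
  -- rank D₂ + rank A₂ = rank B₂
  have sub2 : B₂.rank ≤ (B₂ - A₂).rank + A₂.rank := by
    have := CEaux.rank_add_le' (B₂ - A₂) A₂
    rwa [sub_add_cancel] at this
  have e4 : (B₂ - A₂).rank + A₂.rank = B₂.rank := by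
    rcases le_or_gt A₂.rank B₂.rank with hle | hlt
    · omega
    · exfalso
      have h0 : (B₂ - A₂).rank = 0 := by omega
      have h0' : B₂ - A₂ = 0 := CEaux.eq_zero_of_rank_eq_zero h0
      have : B₂ = A₂ := by rwa [sub_eq_zero] at h0'
      rw [this] at hlt
      exact lt_irrefl _ hlt
  have i5 : (B - A).rank ≤ (B₁ - A₁).rank + (B₂ - A₂).rank := by
    have hBA : B - A = (B₁ - A₁) + (B₂ - A₂) := by rw [hAeq, hBeq]; abel
    rw [hBA]; exact CEaux.rank_add_le' _ _
  have i6 : B.rank ≤ (B - A).rank + A.rank := by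
    have := CEaux.rank_add_le' (B - A) A
    rwa [sub_add_cancel] at this
  omega
end

section
/- Let A = U · fromBlocks T S 0 N · Uᴴ be a core-EP decomposition of the square complex matrix A, let G = U · fromBlocks T⁻¹ 0 0 0 · Uᴴ be its core-EP inverse, and let W = U · fromBlocks T⁻¹ (T⁻¹·T⁻¹·S) 0 0 · Uᴴ be its WG inverse. Then for every square complex matrix B of the same size: (G·A = G·B and A·G = B·G) if and only if (A·W = B·W and Aᴴ·W = Bᴴ·W). That is, A is below B in the core-EP order if and only if A·A^WG = B·A^WG and Aᴴ·A^WG = Bᴴ·A^WG. -/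
/-!
Conjugation by the unitary `U` is an injective map preserving products and `ᴴ`, so both
relations can be tested after writing `Uᴴ B U` in blocks `X₁₁ X₁₂ X₂₁ X₂₂`. In block form each
relation says exactly `X₁₁ = T`, `X₁₂ = S`, `X₂₁ = 0`: the core-EP relation reads `T⁻¹ X₁₁ = T⁻¹ T`,
`T⁻¹ X₁₂ = T⁻¹ S` and `X₂₁ T⁻¹ = 0`, while the WG relation reads `X₁₁ T⁻¹ = T T⁻¹`,
`X₂₁ T⁻¹ = 0` and, from the `ᴴ` part, `X₁₂ᴴ T⁻¹ = Sᴴ T⁻¹`.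
-/

open Matrix

section Relations

variable {R : Type*}

/-- With `G` the core-EP inverse of `A`, this is the core-EP order `A ≤⊕ B`. -/
def IsCoreEPBelow [Mul R] (G A B : R) : Prop := G * A = G * B ∧ A * G = B * G

def IsWGBelow [Mul R] [Star R] (W A B : R) : Prop := A * W = B * W ∧ star A * W = star B * W

variable {R' F : Type*} [Mul R] [Mul R'] [FunLike F R R'] [MulHomClass F R R']

theorem isCoreEPBelow_map_iff {φ : F} (hφ : Function.Injective φ) {G A B : R} :
    IsCoreEPBelow (φ G) (φ A) (φ B) ↔ IsCoreEPBelow G A B := by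
  simp only [IsCoreEPBelow, ← map_mul, hφ.eq_iff]

theorem isWGBelow_map_iff [Star R] [Star R'] [StarHomClass F R R'] {φ : F}
    (hφ : Function.Injective φ) {W A B : R} :
    IsWGBelow (φ W) (φ A) (φ B) ↔ IsWGBelow W A B := by
  simp only [IsWGBelow, ← map_star, ← map_mul, hφ.eq_iff]

end Relations

namespace Matrix

variable {m p R : Type*} [Fintype m] [Fintype p] [DecidableEq m] [CommRing R]
  {T : Matrix m m R}

theorem mul_nonsing_inv_left_inj {n : Type*} (hT : IsUnit T) {X Y : Matrix n m R} :
    X * T⁻¹ = Y * T⁻¹ ↔ X = Y :=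
  (mul_left_injective_of_inv T⁻¹ T (nonsing_inv_mul T ((isUnit_iff_isUnit_det T).1 hT))).eq_iff

theorem nonsing_inv_mul_right_inj {n : Type*} (hT : IsUnit T) {X Y : Matrix m n R} :
    T⁻¹ * X = T⁻¹ * Y ↔ X = Y :=
  (mul_right_injective_of_inv T T⁻¹ (mul_nonsing_inv T ((isUnit_iff_isUnit_det T).1 hT))).eq_iff

theorem mul_nonsing_inv_eq_zero {n : Type*} (hT : IsUnit T) {X : Matrix n m R} :
    X * T⁻¹ = 0 ↔ X = 0 := by
  simpa using mul_nonsing_inv_left_inj hT (Y := 0)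

theorem isCoreEPBelow_fromBlocks_iff (hT : IsUnit T) (S : Matrix m p R) (N : Matrix p p R)
    (X₁₁ : Matrix m m R) (X₁₂ : Matrix m p R) (X₂₁ : Matrix p m R) (X₂₂ : Matrix p p R) :
    IsCoreEPBelow (fromBlocks T⁻¹ 0 0 0) (fromBlocks T S 0 N) (fromBlocks X₁₁ X₁₂ X₂₁ X₂₂) ↔
      X₁₁ = T ∧ X₁₂ = S ∧ X₂₁ = 0 := by
  simp only [IsCoreEPBelow, fromBlocks_multiply, fromBlocks_inj, Matrix.zero_mul, Matrix.mul_zero,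
    add_zero]
  constructor
  · rintro ⟨⟨h₁₁, h₁₂, -⟩, -, -, h₂₁, -⟩
    exact ⟨((nonsing_inv_mul_right_inj hT).1 h₁₁).symm, ((nonsing_inv_mul_right_inj hT).1 h₁₂).symm,
      (mul_nonsing_inv_eq_zero hT).1 h₂₁.symm⟩
  · rintro ⟨rfl, rfl, rfl⟩
    simp

theorem isWGBelow_fromBlocks_iff [StarRing R] (hT : IsUnit T) (S : Matrix m p R) (N : Matrix p p R)
    (X₁₁ : Matrix m m R) (X₁₂ : Matrix m p R) (X₂₁ : Matrix p m R) (X₂₂ : Matrix p p R) :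
    IsWGBelow (fromBlocks T⁻¹ (T⁻¹ * T⁻¹ * S) 0 0) (fromBlocks T S 0 N)
        (fromBlocks X₁₁ X₁₂ X₂₁ X₂₂) ↔
      X₁₁ = T ∧ X₁₂ = S ∧ X₂₁ = 0 := by
  simp only [IsWGBelow, star_eq_conjTranspose, fromBlocks_conjTranspose, conjTranspose_zero,
    fromBlocks_multiply, fromBlocks_inj, Matrix.zero_mul, Matrix.mul_zero, add_zero]
  constructor
  · rintro ⟨⟨h₁₁, -, h₂₁, -⟩, -, -, h₁₂, -⟩
    refine ⟨((mul_nonsing_inv_left_inj hT).1 h₁₁).symm, ?_, (mul_nonsing_inv_eq_zero hT).1 h₂₁.symm⟩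
    exact conjTranspose_inj.1 ((mul_nonsing_inv_left_inj hT).1 h₁₂).symm
  · rintro ⟨rfl, rfl, rfl⟩
    simp

end Matrix

theorem coreEP_order_iff_wg_general {m p : Type*}
    [Fintype m] [Fintype p] [DecidableEq m] [DecidableEq p]
    (U : Matrix (m ⊕ p) (m ⊕ p) ℂ) (T : Matrix m m ℂ) (S : Matrix m p ℂ) (N : Matrix p p ℂ)
    (hU : U * Uᴴ = 1) (hU' : Uᴴ * U = 1) (hT : IsUnit T)
    (A G W : Matrix (m ⊕ p) (m ⊕ p) ℂ)
    (hA : A = U * Matrix.fromBlocks T S 0 N * Uᴴ)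
    (hG : G = U * Matrix.fromBlocks T⁻¹ 0 0 0 * Uᴴ)
    (hW : W = U * Matrix.fromBlocks T⁻¹ (T⁻¹ * T⁻¹ * S) 0 0 * Uᴴ) :
    ∀ B : Matrix (m ⊕ p) (m ⊕ p) ℂ,
      (G * A = G * B ∧ A * G = B * G) ↔ (A * W = B * W ∧ Aᴴ * W = Bᴴ * W) := by
  let φ := Unitary.conjStarAlgAut ℂ _ ⟨U, Unitary.mem_iff.2 ⟨hU', hU⟩⟩
  intro B
  obtain ⟨X, rfl⟩ := φ.surjective B
  rw [← fromBlocks_toBlocks X]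
  subst hA hG hW
  -- `φ` is `X ↦ U * X * Uᴴ` by definition, and `star` on matrices is `ᴴ`.
  change IsCoreEPBelow (φ _) (φ _) (φ _) ↔ IsWGBelow (φ _) (φ _) (φ _)
  rw [isCoreEPBelow_map_iff (EquivLike.injective φ), isWGBelow_map_iff (EquivLike.injective φ),
    isCoreEPBelow_fromBlocks_iff hT, isWGBelow_fromBlocks_iff hT]

/-- For `A = U · fromBlocks T S 0 N · Uᴴ` with core-EP inverse `G` and WG inverse `W`,
and any `B` of the same size: `A` is below `B` in the core-EP order
(`G·A = G·B` and `A·G = B·G`) if and only if `A·W = B·W` and `Aᴴ·W = Bᴴ·W`. -/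
theorem coreEP_order_iff_wg {m p : Type*}
    [Fintype m] [Fintype p] [DecidableEq m] [DecidableEq p]
    (U : Matrix (m ⊕ p) (m ⊕ p) ℂ) (T : Matrix m m ℂ) (S : Matrix m p ℂ) (N : Matrix p p ℂ)
    (hU : U * Uᴴ = 1) (hU' : Uᴴ * U = 1) (hT : IsUnit T) (hN : IsNilpotent N)
    (A G W : Matrix (m ⊕ p) (m ⊕ p) ℂ)
    (hA : A = U * Matrix.fromBlocks T S 0 N * Uᴴ)
    (hG : G = U * Matrix.fromBlocks T⁻¹ 0 0 0 * Uᴴ)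
    (hW : W = U * Matrix.fromBlocks T⁻¹ (T⁻¹ * T⁻¹ * S) 0 0 * Uᴴ) :
    ∀ B : Matrix (m ⊕ p) (m ⊕ p) ℂ,
      (G * A = G * B ∧ A * G = B * G) ↔ (A * W = B * W ∧ Aᴴ * W = Bᴴ * W) :=
  coreEP_order_iff_wg_general U T S N hU hU' hT A G W hA hG hW
end

section
/- Let A = U · fromBlocks T S 0 N · Uᴴ be a core-EP decomposition of the square complex matrix A and let W = U · fromBlocks T⁻¹ (T⁻¹·T⁻¹·S) 0 0 · Uᴴ be its WG inverse. Let B be a square complex matrix of the same size and write Uᴴ·B·U = fromBlocks B₁ B₂ B₃ B₄ (partitioned conformally with A). Then A·W = B·W and Aᴴ·W = Bᴴ·W if and only if B₁ = T, B₂ = S, and B₃ = 0 (with B₄ arbitrary). -/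
open Matrix

/-- For `A = U · fromBlocks T S 0 N · Uᴴ` with WG inverse `W`, and `B` with
`Uᴴ·B·U = fromBlocks B₁ B₂ B₃ B₄`: `A·W = B·W` and `Aᴴ·W = Bᴴ·W` if and only if
`B₁ = T`, `B₂ = S` and `B₃ = 0` (with `B₄` arbitrary). -/
theorem wg_order_condition_block_char {m p : Type*}
    [Fintype m] [Fintype p] [DecidableEq m] [DecidableEq p]
    (U : Matrix (m ⊕ p) (m ⊕ p) ℂ) (T : Matrix m m ℂ) (S : Matrix m p ℂ) (N : Matrix p p ℂ)
    (hU : U * Uᴴ = 1) (hU' : Uᴴ * U = 1) (hT : IsUnit T) (hN : IsNilpotent N)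
    (A W B : Matrix (m ⊕ p) (m ⊕ p) ℂ)
    (hA : A = U * Matrix.fromBlocks T S 0 N * Uᴴ)
    (hW : W = U * Matrix.fromBlocks T⁻¹ (T⁻¹ * T⁻¹ * S) 0 0 * Uᴴ)
    (B₁ : Matrix m m ℂ) (B₂ : Matrix m p ℂ) (B₃ : Matrix p m ℂ) (B₄ : Matrix p p ℂ)
    (hB : Uᴴ * B * U = Matrix.fromBlocks B₁ B₂ B₃ B₄) :
    (A * W = B * W ∧ Aᴴ * W = Bᴴ * W) ↔ (B₁ = T ∧ B₂ = S ∧ B₃ = 0) := by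
  have hTdet : IsUnit T.det := (Matrix.isUnit_iff_isUnit_det T).mp hT
  have hTi : T * T⁻¹ = 1 := Matrix.mul_nonsing_inv T hTdet
  have hTi' : T⁻¹ * T = 1 := Matrix.nonsing_inv_mul T hTdet
  have hBeq : B = U * Matrix.fromBlocks B₁ B₂ B₃ B₄ * Uᴴ := by
    rw [← hB]
    calc B = (U * Uᴴ) * B * (U * Uᴴ) := by rw [hU]; simp
    _ = U * (Uᴴ * B * U) * Uᴴ := by simp [Matrix.mul_assoc]
  have cancel : ∀ X Y : Matrix (m ⊕ p) (m ⊕ p) ℂ,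
      U * X * Uᴴ = U * Y * Uᴴ ↔ X = Y := by
    intro X Y
    constructor
    · intro h
      have h2 := congrArg (fun Z => Uᴴ * Z * U) h
      simp only [← Matrix.mul_assoc, hU', Matrix.one_mul] at h2
      simp only [Matrix.mul_assoc, hU', Matrix.mul_one] at h2
      exact h2
    · intro h; rw [h]
  have key : ∀ X Y : Matrix (m ⊕ p) (m ⊕ p) ℂ,
      (U * X * Uᴴ) * (U * Y * Uᴴ) = U * (X * Y) * Uᴴ := by
    intro X Y
    calc (U * X * Uᴴ) * (U * Y * Uᴴ) = U * X * (Uᴴ * U) * Y * Uᴴ := by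
          simp [Matrix.mul_assoc]
    _ = U * (X * Y) * Uᴴ := by rw [hU']; simp [Matrix.mul_assoc]
  have hAH : Aᴴ = U * (Matrix.fromBlocks T S 0 N)ᴴ * Uᴴ := by
    rw [hA]; simp [Matrix.conjTranspose_mul, Matrix.mul_assoc]
  have hBH : Bᴴ = U * (Matrix.fromBlocks B₁ B₂ B₃ B₄)ᴴ * Uᴴ := by
    rw [hBeq]; simp [Matrix.conjTranspose_mul, Matrix.mul_assoc]
  rw [hAH, hBH, hA, hW, hBeq, key, key, key, key, cancel, cancel]
  rw [Matrix.fromBlocks_conjTranspose, Matrix.fromBlocks_conjTranspose]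
  simp only [Matrix.fromBlocks_multiply, Matrix.mul_zero, Matrix.zero_mul,
    add_zero, zero_add, Matrix.conjTranspose_zero]
  rw [Matrix.fromBlocks_inj, Matrix.fromBlocks_inj]
  constructor
  · rintro ⟨⟨h1, h2, h3, h4⟩, ⟨h5, h6, h7, h8⟩⟩
    have hB1 : B₁ = T := by
      have := congrArg (fun Z => Z * T) h1
      simpa [Matrix.mul_assoc, hTi', hTi, Matrix.mul_one] using this.symm
    have hB3 : B₃ = 0 := by
      have := congrArg (fun Z => Z * T) h3
      simpa [Matrix.mul_assoc, hTi', Matrix.mul_one] using this.symm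
    have hB2 : B₂ = S := by
      have := congrArg (fun Z => Z * T) h7
      have h2' : Sᴴ = B₂ᴴ := by
        simpa [Matrix.mul_assoc, hTi', Matrix.mul_one] using this
      have := congrArg Matrix.conjTranspose h2'
      simpa using this.symm
    exact ⟨hB1, hB2, hB3⟩
  · rintro ⟨h1, h2, h3⟩
    subst h1; subst h2; subst h3
    simp
end
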